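/- arXiv:2412.16274 — 6 statements merged into one kernel-verified Lean document; each statement's English description precedes it below -/
import Mathlib

section
/- There exists $C > 0$ such that for all $n \ge 1$ and all $\vec w = (w_1,\dots,w_n) \in [-2,2]^n$: $\big|U\big(1 + \sum_{k=1}^n (-1)^k (w_k + 1)\big) - \sum_{k=1}^n U(w_k)\big| \le C \max_{1 \le i < j \le n} |1 - w_i|\,|1 + w_j|$. -/
open Set Finset


/-- There exists `C > 0` (depending on `n` and `U`) such that for all `w ∈ [-2,2]ⁿ`,
`|U(1 + ∑ (-1)^k (w_k+1)) - ∑ U(w_k)| ≤ C max_{i<j} |1-w_i||1+w_j|`.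
The maximum is encoded as: the bound holds with `C·B` for every nonnegative `B` dominating
all the products `|1-w_i||1+w_j|`, `i < j`. -/
theorem stmt_8 (U : ℝ → ℝ) (hU : ContDiff ℝ (⊤ : ℕ∞) U)
    (hUeven : ∀ y, U (-y) = U y)
    (hU1 : U 1 = 0) (hUm1 : U (-1) = 0)
    (hU'1 : deriv U 1 = 0) (hU'm1 : deriv U (-1) = 0)
    (n : ℕ) (hn : 1 ≤ n) :
    ∃ C > 0, ∀ w : Fin n → ℝ, (∀ k, w k ∈ Set.Icc (-2:ℝ) 2) →
      ∀ B : ℝ, 0 ≤ B →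
        (∀ i j : Fin n, i < j → |1 - w i| * |1 + w j| ≤ B) →
        |U (1 + ∑ k : Fin n, (-1:ℝ)^((k:ℕ)+1) * (w k + 1)) - ∑ k : Fin n, U (w k)|
          ≤ C * B := by
  have hUdiff : Differentiable ℝ U := hU.differentiable (by simp)
  have hU' : ContDiff ℝ (⊤:ℕ∞) (deriv U) := (contDiff_infty_iff_deriv.mp (hU.of_le (by simp))).2
  have hU'diff : Differentiable ℝ (deriv U) := hU'.differentiable (by simp)
  have hU''cont : Continuous (deriv (deriv U)) := ((contDiff_infty_iff_deriv.mp hU').2).continuous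
  set R : ℝ := 3 * n + 2 with hR
  have hR2 : (2:ℝ) ≤ R := by
    have : (0:ℝ) ≤ 3 * n := by positivity
    rw [hR]; linarith
  set K : Set ℝ := Set.Icc (-R) R with hK
  have hKconvex : Convex ℝ K := convex_Icc _ _
  obtain ⟨M, hM⟩ := isCompact_Icc.exists_bound_of_continuousOn
    (hU''cont.continuousOn (s := K))
  set L : ℝ := max M 0 with hLdef
  have hL0 : 0 ≤ L := le_max_right _ _
  have hmemK : ∀ x : ℝ, |x| ≤ R → x ∈ K := by
    intro x hx
    rw [hK, Set.mem_Icc]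
    constructor <;> [linarith [neg_abs_le x]; linarith [le_abs_self x]]
  have h1K : (1:ℝ) ∈ K := hmemK 1 (by rw [abs_one]; linarith)
  have hm1K : (-1:ℝ) ∈ K := hmemK (-1) (by rw [abs_neg, abs_one]; linarith)
  -- Lipschitz bound for deriv U on K
  have hLip : ∀ x ∈ K, ∀ y ∈ K, |deriv U y - deriv U x| ≤ L * |y - x| := by
    intro x hx y hy
    have := Convex.norm_image_sub_le_of_norm_deriv_le (f := deriv U) (s := K) (C := L)
      (fun z _ => hU'diff z)
      (fun z hz => by
        rw [Real.norm_eq_abs]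
        exact le_trans (by simpa using hM z hz) (le_max_left _ _))
      hKconvex hx hy
    simpa [Real.norm_eq_abs] using this
  -- first derivative bounds
  have hD1 : ∀ x ∈ K, |deriv U x| ≤ L * |x - 1| := by
    intro x hx
    have := hLip 1 h1K x hx
    rwa [hU'1, sub_zero] at this
  have hDm1 : ∀ x ∈ K, |deriv U x| ≤ L * |x + 1| := by
    intro x hx
    have := hLip (-1) hm1K x hx
    rwa [hU'm1, sub_zero, sub_neg_eq_add] at this
  -- Taylor-type bound
  have hTaylor : ∀ x₀ ∈ K, ∀ x ∈ K,
      |U x - U x₀| ≤ (|deriv U x₀| + L * |x - x₀|) * |x - x₀| := by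
    intro x₀ hx₀ x hx
    have hsub : Set.uIcc x₀ x ⊆ K := by
      rw [hK, ← Set.uIcc_of_le (by linarith : -R ≤ R)]
      rw [hK] at hx₀ hx
      exact Set.uIcc_subset_uIcc ((Set.uIcc_of_le (by linarith : -R ≤ R)) ▸ hx₀)
        ((Set.uIcc_of_le (by linarith : -R ≤ R)) ▸ hx)
    have := Convex.norm_image_sub_le_of_norm_deriv_le (f := U) (s := Set.uIcc x₀ x)
      (fun z _ => hUdiff z)
      (fun z hz => by
        rw [Real.norm_eq_abs]
        have hzK : z ∈ K := hsub hz
        have h1 : |deriv U z - deriv U x₀| ≤ L * |z - x₀| := hLip x₀ hx₀ z hzK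
        have h2 : |z - x₀| ≤ |x - x₀| := by
          rcases Set.mem_uIcc.mp hz with ⟨h3, h4⟩ | ⟨h3, h4⟩ <;>
            rw [abs_sub_comm z x₀, abs_sub_comm x x₀] <;>
            rcases abs_cases (x₀ - z) with ⟨he, _⟩ | ⟨he, _⟩ <;>
            rcases abs_cases (x₀ - x) with ⟨hf, _⟩ | ⟨hf, _⟩ <;> linarith
        calc |deriv U z| ≤ |deriv U x₀| + |deriv U z - deriv U x₀| := by
              have := abs_add_le (deriv U x₀) (deriv U z - deriv U x₀); simpa using this
          _ ≤ |deriv U x₀| + L * |x - x₀| := by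
              have := mul_le_mul_of_nonneg_left h2 hL0; linarith)
      (convex_uIcc _ _) Set.left_mem_uIcc Set.right_mem_uIcc
    simpa [Real.norm_eq_abs] using this
  have hQuad1 : ∀ x ∈ K, |U x| ≤ L * |x - 1| ^ 2 := by
    intro x hx
    have := hTaylor 1 h1K x hx
    rw [hU1, hU'1, sub_zero, abs_zero, zero_add] at this
    calc |U x| ≤ L * |x - 1| * |x - 1| := this
      _ = L * |x - 1| ^ 2 := by ring
  have hQuadm1 : ∀ x ∈ K, |U x| ≤ L * |x + 1| ^ 2 := by
    intro x hx
    have := hTaylor (-1) hm1K x hx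
    rw [hUm1, hU'm1, sub_zero, abs_zero, zero_add, sub_neg_eq_add] at this
    calc |U x| ≤ L * |x + 1| * |x + 1| := this
      _ = L * |x + 1| ^ 2 := by ring
  refine ⟨L * (n^2 + 2*n) + 1, by positivity, ?_⟩
  intro w hw B hB hprod
  set sB := Real.sqrt B with hsBdef
  have hsB0 : 0 ≤ sB := Real.sqrt_nonneg _
  have hsBsq : sB * sB = B := Real.mul_self_sqrt hB
  set F : ℕ → ℝ := fun i => if h : i < n then w ⟨i, h⟩ else 0 with hFdef
  have hFeq : ∀ k : Fin n, F (k:ℕ) = w k := fun k => by simp [hFdef, k.isLt]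
  have habs : ∀ i, |F i| ≤ 2 := by
    intro i
    by_cases h : i < n
    · rw [hFdef]; simp only; rw [dif_pos h]
      obtain ⟨h1, h2⟩ := hw ⟨i, h⟩
      rw [abs_le]; exact ⟨h1, h2⟩
    · rw [hFdef]; simp only; rw [dif_neg h, abs_zero]; norm_num
  have hFK : ∀ i, F i ∈ K := fun i => hmemK _ ((habs i).trans hR2)
  have hsum1 : (∑ k : Fin n, (-1:ℝ)^((k:ℕ)+1) * (w k + 1))
      = ∑ i ∈ Finset.range n, (-1:ℝ)^(i+1) * (F i + 1) := by
    rw [← Fin.sum_univ_eq_sum_range (fun i => (-1:ℝ)^(i+1) * (F i + 1)) n]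
    exact Finset.sum_congr rfl fun k _ => by rw [hFeq]
  have hsum2 : (∑ k : Fin n, U (w k)) = ∑ i ∈ Finset.range n, U (F i) := by
    rw [← Fin.sum_univ_eq_sum_range (fun i => U (F i)) n]
    exact Finset.sum_congr rfl fun k _ => by rw [hFeq]
  rw [hsum1, hsum2]
  set sVal := 1 + ∑ i ∈ Finset.range n, (-1:ℝ)^(i+1) * (F i + 1) with hsV
  have hsValK : sVal ∈ K := by
    apply hmemK
    have h1 : |∑ i ∈ Finset.range n, (-1:ℝ)^(i+1) * (F i + 1)| ≤ 3 * n := by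
      calc |∑ i ∈ Finset.range n, (-1:ℝ)^(i+1) * (F i + 1)|
          ≤ ∑ i ∈ Finset.range n, |(-1:ℝ)^(i+1) * (F i + 1)| :=
            Finset.abs_sum_le_sum_abs _ _
        _ ≤ ∑ _i ∈ Finset.range n, (3:ℝ) := Finset.sum_le_sum (fun i _ => by
            rw [abs_mul, abs_pow, abs_neg, abs_one, one_pow, one_mul]
            have h2 := habs i
            have h3 := abs_add_le (F i) 1
            rw [abs_one] at h3
            linarith)
        _ = 3 * n := by rw [Finset.sum_const, Finset.card_range]; ring
    have h4 := abs_add_le (1:ℝ) (∑ i ∈ Finset.range n, (-1:ℝ)^(i+1) * (F i + 1))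
    rw [abs_one] at h4
    rw [← hsV] at h4
    rw [hR]
    linarith
  have hgeo : ∀ m : ℕ, (1:ℝ) + (-1)^(m+1) - 2 * ∑ i ∈ Finset.range m, (-1:ℝ)^i = 0 := by
    intro m
    rw [neg_one_geom_sum]
    rcases Nat.even_or_odd m with he | ho
    · rw [if_pos he, pow_succ, he.neg_one_pow]; ring
    · rw [if_neg (Nat.not_even_iff_odd.mpr ho), pow_succ, ho.neg_one_pow]; ring
  have hsplitsum : ∀ m : ℕ,
      (∑ i ∈ Finset.range m, (-1:ℝ)^(i+1) * (F i + 1))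
        - ∑ i ∈ Finset.range m, (-1:ℝ)^i * (1 - F i)
      = -2 * ∑ i ∈ Finset.range m, (-1:ℝ)^i := by
    intro m
    rw [← Finset.sum_sub_distrib, Finset.mul_sum]
    exact Finset.sum_congr rfl fun i _ => by ring
  by_cases hcase : ∀ k : Fin n, |1 - w k| ≤ sB
  · -- all |1 - w k| small
    set eps := ∑ i ∈ Finset.range n, (-1:ℝ)^i * (1 - F i) with hepsdef
    have hp : (-1:ℝ)^(n+1) = -(-1)^n := by rw [pow_succ]; ring
    have hid : sVal = (-1)^n + eps := by
      have h1 := hsplitsum n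
      have h2 := hgeo n
      rw [hsV, hepsdef]
      linarith
    have heps : |eps| ≤ n * sB := by
      calc |eps| ≤ ∑ i ∈ Finset.range n, |(-1:ℝ)^i * (1 - F i)| :=
            Finset.abs_sum_le_sum_abs _ _
        _ ≤ ∑ _i ∈ Finset.range n, sB := Finset.sum_le_sum (fun i hi => by
            rw [abs_mul, abs_pow, abs_neg, abs_one, one_pow, one_mul]
            have hi' := Finset.mem_range.mp hi
            have h5 := hcase ⟨i, hi'⟩
            rwa [← hFeq ⟨i, hi'⟩] at h5)
        _ = n * sB := by rw [Finset.sum_const, Finset.card_range, nsmul_eq_mul]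
    have hepsnn : (0:ℝ) ≤ n * sB := by positivity
    have hUs : |U sVal| ≤ L * ((n:ℝ) * sB)^2 := by
      rcases Nat.even_or_odd n with he | ho
      · have he1 : sVal - 1 = eps := by rw [hid, he.neg_one_pow]; ring
        have h2 := hQuad1 sVal hsValK
        rw [he1] at h2
        refine h2.trans (mul_le_mul_of_nonneg_left ?_ hL0)
        rw [sq, sq]
        exact mul_self_le_mul_self (abs_nonneg eps) heps
      · have he1 : sVal + 1 = eps := by rw [hid, ho.neg_one_pow]; ring
        have h2 := hQuadm1 sVal hsValK
        rw [he1] at h2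
        refine h2.trans (mul_le_mul_of_nonneg_left ?_ hL0)
        rw [sq, sq]
        exact mul_self_le_mul_self (abs_nonneg eps) heps
    have hterm : ∀ i ∈ Finset.range n, |U (F i)| ≤ L * B := by
      intro i hi
      have hi' := Finset.mem_range.mp hi
      have h2 := hQuad1 (F i) (hFK i)
      have h3 : |F i - 1| ≤ sB := by
        rw [abs_sub_comm]
        have h5 := hcase ⟨i, hi'⟩
        rwa [← hFeq ⟨i, hi'⟩] at h5
      refine h2.trans ?_
      have h6 : |F i - 1|^2 ≤ B := by
        rw [sq, ← hsBsq]
        exact mul_self_le_mul_self (abs_nonneg _) h3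
      exact mul_le_mul_of_nonneg_left h6 hL0
    have hsum3 : |∑ i ∈ Finset.range n, U (F i)| ≤ (n:ℝ) * (L * B) := by
      calc |∑ i ∈ Finset.range n, U (F i)| ≤ ∑ i ∈ Finset.range n, |U (F i)| :=
            Finset.abs_sum_le_sum_abs _ _
        _ ≤ ∑ _i ∈ Finset.range n, L * B := Finset.sum_le_sum hterm
        _ = (n:ℝ) * (L * B) := by rw [Finset.sum_const, Finset.card_range, nsmul_eq_mul]
    have hnsq : ((n:ℝ) * sB)^2 = (n:ℝ)^2 * B := by rw [mul_pow, sq sB, hsBsq]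
    calc |U sVal - ∑ i ∈ Finset.range n, U (F i)|
        ≤ |U sVal| + |∑ i ∈ Finset.range n, U (F i)| := abs_sub _ _
      _ ≤ L * ((n:ℝ)^2 * B) + (n:ℝ) * (L * B) := by rw [← hnsq]; linarith
      _ ≤ (L * (n^2 + 2*n) + 1) * B := by
          have he : (L * ((n:ℝ)^2 + 2*(n:ℝ)) + 1) * B
              = L * ((n:ℝ)^2*B) + (n:ℝ)*(L*B) + ((n:ℝ)*(L*B) + B) := by ring
          have h9 : 0 ≤ (n:ℝ)*(L*B) := by positivity
          linarith
  · push_neg at hcase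
    have hFeq' : ∀ (j : ℕ) (hj : j < n), F j = w ⟨j, hj⟩ := by
      intro j hj
      rw [hFdef]; simp only; rw [dif_pos hj]
    set S : Finset (Fin n) := Finset.univ.filter (fun k => sB < |1 - w k|) with hSdef
    have hSne : S.Nonempty := by
      obtain ⟨k, hk⟩ := hcase
      exact ⟨k, by simp [hSdef, hk]⟩
    set m' : Fin n := S.min' hSne with hm'def
    have hm'S : m' ∈ S := S.min'_mem hSne
    have hm'A : sB < |1 - w m'| := by
      have h0 := hm'S; rw [hSdef, Finset.mem_filter] at h0; exact h0.2
    set m : ℕ := (m' : ℕ) with hmdef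
    have hm : m < n := m'.isLt
    have hFm : F m = w m' := by
      rw [hFeq' m hm]
    have hmA : sB < |1 - F m| := by rw [hFm]; exact hm'A
    have hlt : ∀ i, i < m → |1 - F i| ≤ sB := by
      intro i him
      have hin : i < n := him.trans hm
      by_contra hcon
      push_neg at hcon
      have hiS : (⟨i, hin⟩ : Fin n) ∈ S := by
        rw [hSdef, Finset.mem_filter]
        refine ⟨Finset.mem_univ _, ?_⟩
        rw [← hFeq' i hin]
        exact hcon
      have h6 := S.min'_le _ hiS
      rw [← hm'def] at h6
      have h7 : m ≤ i := h6
      omega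
    have hgt : ∀ j, j < n → m < j → |1 + F j| ≤ sB := by
      intro j hj hmj
      by_contra hcon
      push_neg at hcon
      have hpj : |1 - F m| * |1 + F j| ≤ B := by
        rw [hFm, hFeq' j hj]
        exact hprod m' ⟨j, hj⟩ (by rw [Fin.lt_def]; simpa using hmj)
      have h8 : sB * sB < |1 - F m| * |1 + F j| := mul_lt_mul'' hmA hcon hsB0 hsB0
      rw [hsBsq] at h8
      linarith
    set r : ℝ := (∑ i ∈ Finset.range m, (-1:ℝ)^i * (1 - F i))
      + ∑ i ∈ Finset.Ico (m+1) n, (-1:ℝ)^(i+1) * (F i + 1) with hrdef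
    have hsplit1 : ∑ i ∈ Finset.range n, (-1:ℝ)^(i+1) * (F i + 1)
        = ∑ i ∈ Finset.range m, (-1:ℝ)^(i+1) * (F i + 1)
          + ((-1:ℝ)^(m+1) * (F m + 1)
          + ∑ i ∈ Finset.Ico (m+1) n, (-1:ℝ)^(i+1) * (F i + 1)) := by
      rw [← Finset.sum_range_add_sum_Ico _ hm.le,
        Finset.sum_eq_sum_Ico_succ_bot hm]
    have hid : sVal = (-1:ℝ)^(m+1) * F m + r := by
      have h1 := hsplitsum m
      have h2 := hgeo m
      have h3 : (-1:ℝ)^(m+1) * (F m + 1) = (-1:ℝ)^(m+1) * F m + (-1:ℝ)^(m+1) := by ring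
      rw [hsV, hsplit1, hrdef]
      linarith
    have hbound1 : ∀ i ∈ Finset.range m, |(-1:ℝ)^i * (1 - F i)| ≤ sB := by
      intro i hi
      rw [abs_mul, abs_pow, abs_neg, abs_one, one_pow, one_mul]
      exact hlt i (Finset.mem_range.mp hi)
    have hbound2 : ∀ i ∈ Finset.Ico (m+1) n, |(-1:ℝ)^(i+1) * (F i + 1)| ≤ sB := by
      intro i hi
      rw [abs_mul, abs_pow, abs_neg, abs_one, one_pow, one_mul]
      obtain ⟨h4, h5⟩ := Finset.mem_Ico.mp hi
      have h6 := hgt i h5 (by omega)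
      rwa [add_comm] at h6
    have habs1 : |∑ i ∈ Finset.range m, (-1:ℝ)^i * (1 - F i)|
        ≤ ∑ i ∈ Finset.range m, |(-1:ℝ)^i * (1 - F i)| := Finset.abs_sum_le_sum_abs _ _
    have habs2 : |∑ i ∈ Finset.Ico (m+1) n, (-1:ℝ)^(i+1) * (F i + 1)|
        ≤ ∑ i ∈ Finset.Ico (m+1) n, |(-1:ℝ)^(i+1) * (F i + 1)| := Finset.abs_sum_le_sum_abs _ _
    have htr : |r| ≤ (∑ i ∈ Finset.range m, |(-1:ℝ)^i * (1 - F i)|)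
        + ∑ i ∈ Finset.Ico (m+1) n, |(-1:ℝ)^(i+1) * (F i + 1)| := by
      refine (abs_add_le _ _).trans ?_
      exact add_le_add habs1 habs2
    have hcast : (m:ℝ) + ((n - (m+1) : ℕ):ℝ) ≤ (n:ℝ) := by
      have h9 : m + (n - (m+1)) ≤ n := by omega
      exact_mod_cast h9
    have hr1 : |r| ≤ (n:ℝ) * sB := by
      refine htr.trans ?_
      have t1 : ∑ i ∈ Finset.range m, |(-1:ℝ)^i * (1 - F i)| ≤ (m:ℝ) * sB := by
        calc ∑ i ∈ Finset.range m, |(-1:ℝ)^i * (1 - F i)|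
            ≤ ∑ _i ∈ Finset.range m, sB := Finset.sum_le_sum hbound1
          _ = (m:ℝ) * sB := by rw [Finset.sum_const, Finset.card_range, nsmul_eq_mul]
      have t2 : ∑ i ∈ Finset.Ico (m+1) n, |(-1:ℝ)^(i+1) * (F i + 1)|
          ≤ ((n - (m+1) : ℕ):ℝ) * sB := by
        calc ∑ i ∈ Finset.Ico (m+1) n, |(-1:ℝ)^(i+1) * (F i + 1)|
            ≤ ∑ _i ∈ Finset.Ico (m+1) n, sB := Finset.sum_le_sum hbound2
          _ = ((n - (m+1) : ℕ):ℝ) * sB := by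
              rw [Finset.sum_const, Nat.card_Ico, nsmul_eq_mul]
      have t4 := mul_le_mul_of_nonneg_right hcast hsB0
      calc (∑ i ∈ Finset.range m, |(-1:ℝ)^i * (1 - F i)|)
            + ∑ i ∈ Finset.Ico (m+1) n, |(-1:ℝ)^(i+1) * (F i + 1)|
          ≤ (m:ℝ) * sB + ((n - (m+1) : ℕ):ℝ) * sB := add_le_add t1 t2
        _ = ((m:ℝ) + ((n - (m+1) : ℕ):ℝ)) * sB := by ring
        _ ≤ (n:ℝ) * sB := t4
    set aM := |1 - F m| with haM
    set bM := |1 + F m| with hbM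
    set mn := min aM bM with hmndef
    have hmn0 : 0 ≤ mn := le_min (abs_nonneg _) (abs_nonneg _)
    have hpair1 : ∀ i, i < m → |1 - F i| * mn ≤ B := by
      intro i him
      have hin : i < n := him.trans hm
      have hp : |1 - F i| * bM ≤ B := by
        rw [hbM, hFm, hFeq' i hin]
        exact hprod ⟨i, hin⟩ m' (by rw [Fin.lt_def]; simpa using him)
      calc |1 - F i| * mn ≤ |1 - F i| * bM :=
            mul_le_mul_of_nonneg_left (min_le_right _ _) (abs_nonneg _)
        _ ≤ B := hp
    have hpair2 : ∀ j, j < n → m < j → |F j + 1| * mn ≤ B := by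
      intro j hj hmj
      have hp : aM * |F j + 1| ≤ B := by
        rw [haM, hFm, show |F j + 1| = |1 + F j| from by rw [add_comm], hFeq' j hj]
        exact hprod m' ⟨j, hj⟩ (by rw [Fin.lt_def]; simpa using hmj)
      calc |F j + 1| * mn ≤ |F j + 1| * aM :=
            mul_le_mul_of_nonneg_left (min_le_left _ _) (abs_nonneg _)
        _ = aM * |F j + 1| := by ring
        _ ≤ B := hp
    have hr2 : |r| * mn ≤ (n:ℝ) * B := by
      have u1 : (∑ i ∈ Finset.range m, |(-1:ℝ)^i * (1 - F i)|) * mn ≤ (m:ℝ) * B := by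
        rw [Finset.sum_mul]
        calc ∑ i ∈ Finset.range m, |(-1:ℝ)^i * (1 - F i)| * mn
            ≤ ∑ _i ∈ Finset.range m, B := Finset.sum_le_sum (fun i hi => by
              rw [abs_mul, abs_pow, abs_neg, abs_one, one_pow, one_mul]
              exact hpair1 i (Finset.mem_range.mp hi))
          _ = (m:ℝ) * B := by rw [Finset.sum_const, Finset.card_range, nsmul_eq_mul]
      have u2 : (∑ i ∈ Finset.Ico (m+1) n, |(-1:ℝ)^(i+1) * (F i + 1)|) * mn
          ≤ ((n - (m+1) : ℕ):ℝ) * B := by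
        rw [Finset.sum_mul]
        calc ∑ i ∈ Finset.Ico (m+1) n, |(-1:ℝ)^(i+1) * (F i + 1)| * mn
            ≤ ∑ _i ∈ Finset.Ico (m+1) n, B := Finset.sum_le_sum (fun i hi => by
              rw [abs_mul, abs_pow, abs_neg, abs_one, one_pow, one_mul]
              obtain ⟨h4, h5⟩ := Finset.mem_Ico.mp hi
              exact hpair2 i h5 (by omega))
          _ = ((n - (m+1) : ℕ):ℝ) * B := by
              rw [Finset.sum_const, Nat.card_Ico, nsmul_eq_mul]
      calc |r| * mn
          ≤ ((∑ i ∈ Finset.range m, |(-1:ℝ)^i * (1 - F i)|)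
            + ∑ i ∈ Finset.Ico (m+1) n, |(-1:ℝ)^(i+1) * (F i + 1)|) * mn :=
            mul_le_mul_of_nonneg_right htr hmn0
        _ = (∑ i ∈ Finset.range m, |(-1:ℝ)^i * (1 - F i)|) * mn
            + (∑ i ∈ Finset.Ico (m+1) n, |(-1:ℝ)^(i+1) * (F i + 1)|) * mn := by ring
        _ ≤ (m:ℝ) * B + ((n - (m+1) : ℕ):ℝ) * B := add_le_add u1 u2
        _ = ((m:ℝ) + ((n - (m+1) : ℕ):ℝ)) * B := by ring
        _ ≤ (n:ℝ) * B := mul_le_mul_of_nonneg_right hcast hB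
    set x₀ : ℝ := (-1:ℝ)^(m+1) * F m with hx₀def
    have hx₀K : x₀ ∈ K := by
      apply hmemK
      rw [hx₀def, abs_mul, abs_pow, abs_neg, abs_one, one_pow, one_mul]
      exact (habs m).trans hR2
    have hx₀cases : x₀ = -F m ∨ x₀ = F m := by
      rcases Nat.even_or_odd m with he | ho
      · left; rw [hx₀def, (he.add_one).neg_one_pow]; ring
      · right; rw [hx₀def, (ho.add_one).neg_one_pow]; ring
    have hUx₀ : U x₀ = U (F m) := by
      rcases hx₀cases with h | h
      · rw [h]; exact hUeven (F m)
      · rw [h]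
    have hU'x₀ : |deriv U x₀| ≤ L * mn := by
      have d1 := hD1 x₀ hx₀K
      have d2 := hDm1 x₀ hx₀K
      rcases hx₀cases with h | h
      · have e1 : |x₀ - 1| = bM := by
          rw [h, show -F m - 1 = -(1 + F m) from by ring, abs_neg, hbM]
        have e2 : |x₀ + 1| = aM := by
          rw [h, show -F m + 1 = 1 - F m from by ring, haM]
        rw [e1] at d1; rw [e2] at d2
        rcases le_total aM bM with hle | hle
        · rw [hmndef, min_eq_left hle]; exact d2
        · rw [hmndef, min_eq_right hle]; exact d1
      · have e1 : |x₀ - 1| = aM := by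
          rw [h, abs_sub_comm, haM]
        have e2 : |x₀ + 1| = bM := by
          rw [h, add_comm, hbM]
        rw [e1] at d1; rw [e2] at d2
        rcases le_total aM bM with hle | hle
        · rw [hmndef, min_eq_left hle]; exact d1
        · rw [hmndef, min_eq_right hle]; exact d2
    have hrK := hTaylor x₀ hx₀K sVal hsValK
    have hsvx : sVal - x₀ = r := by rw [hid, hx₀def]; ring
    rw [hsvx] at hrK
    have hmain : |U sVal - U (F m)| ≤ L * ((n:ℝ) * B) + L * ((n:ℝ) * sB)^2 := by
      rw [← hUx₀]
      refine hrK.trans ?_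
      have e3 : (|deriv U x₀| + L * |r|) * |r| = |deriv U x₀| * |r| + L * (|r| * |r|) := by ring
      rw [e3]
      have e4 : |deriv U x₀| * |r| ≤ L * ((n:ℝ) * B) := by
        calc |deriv U x₀| * |r| ≤ (L * mn) * |r| :=
              mul_le_mul_of_nonneg_right hU'x₀ (abs_nonneg _)
          _ = L * (|r| * mn) := by ring
          _ ≤ L * ((n:ℝ) * B) := mul_le_mul_of_nonneg_left hr2 hL0
      have e5 : |r| * |r| ≤ ((n:ℝ) * sB)^2 := by
        rw [sq]
        exact mul_self_le_mul_self (abs_nonneg _) hr1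
      have e6 := mul_le_mul_of_nonneg_left e5 hL0
      linarith
    have htail1 : ∀ i ∈ Finset.range m, |U (F i)| ≤ L * B := by
      intro i hi
      have him := Finset.mem_range.mp hi
      refine (hQuad1 (F i) (hFK i)).trans (mul_le_mul_of_nonneg_left ?_ hL0)
      rw [sq, ← hsBsq]
      have h3 : |F i - 1| ≤ sB := by rw [abs_sub_comm]; exact hlt i him
      exact mul_self_le_mul_self (abs_nonneg _) h3
    have htail2 : ∀ i ∈ Finset.Ico (m+1) n, |U (F i)| ≤ L * B := by
      intro i hi
      obtain ⟨h4, h5⟩ := Finset.mem_Ico.mp hi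
      refine (hQuadm1 (F i) (hFK i)).trans (mul_le_mul_of_nonneg_left ?_ hL0)
      rw [sq, ← hsBsq]
      have h3 : |F i + 1| ≤ sB := by rw [add_comm]; exact hgt i h5 (by omega)
      exact mul_self_le_mul_self (abs_nonneg _) h3
    have hUsplit : ∑ i ∈ Finset.range n, U (F i)
        = ∑ i ∈ Finset.range m, U (F i)
          + (U (F m) + ∑ i ∈ Finset.Ico (m+1) n, U (F i)) := by
      rw [← Finset.sum_range_add_sum_Ico _ hm.le, Finset.sum_eq_sum_Ico_succ_bot hm]
    have hs1 : |∑ i ∈ Finset.range m, U (F i)| ≤ (m:ℝ) * (L * B) := by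
      calc |∑ i ∈ Finset.range m, U (F i)| ≤ ∑ i ∈ Finset.range m, |U (F i)| :=
            Finset.abs_sum_le_sum_abs _ _
        _ ≤ ∑ _i ∈ Finset.range m, L * B := Finset.sum_le_sum htail1
        _ = (m:ℝ) * (L * B) := by rw [Finset.sum_const, Finset.card_range, nsmul_eq_mul]
    have hs2 : |∑ i ∈ Finset.Ico (m+1) n, U (F i)| ≤ ((n - (m+1) : ℕ):ℝ) * (L * B) := by
      calc |∑ i ∈ Finset.Ico (m+1) n, U (F i)| ≤ ∑ i ∈ Finset.Ico (m+1) n, |U (F i)| :=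
            Finset.abs_sum_le_sum_abs _ _
        _ ≤ ∑ _i ∈ Finset.Ico (m+1) n, L * B := Finset.sum_le_sum htail2
        _ = ((n - (m+1) : ℕ):ℝ) * (L * B) := by
            rw [Finset.sum_const, Nat.card_Ico, nsmul_eq_mul]
    have hdiff : U sVal - ∑ i ∈ Finset.range n, U (F i)
        = (U sVal - U (F m)) - ∑ i ∈ Finset.range m, U (F i)
          - ∑ i ∈ Finset.Ico (m+1) n, U (F i) := by
      rw [hUsplit]; ring
    rw [hdiff]
    have tineq : |(U sVal - U (F m)) - ∑ i ∈ Finset.range m, U (F i)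
          - ∑ i ∈ Finset.Ico (m+1) n, U (F i)|
        ≤ |U sVal - U (F m)| + |∑ i ∈ Finset.range m, U (F i)|
          + |∑ i ∈ Finset.Ico (m+1) n, U (F i)| := by
      have q1 := abs_sub ((U sVal - U (F m)) - ∑ i ∈ Finset.range m, U (F i))
        (∑ i ∈ Finset.Ico (m+1) n, U (F i))
      have q2 := abs_sub (U sVal - U (F m)) (∑ i ∈ Finset.range m, U (F i))
      linarith
    have hnsq : ((n:ℝ) * sB)^2 = (n:ℝ)^2 * B := by rw [mul_pow, sq sB, hsBsq]
    have htailsum : (m:ℝ) * (L * B) + ((n - (m+1) : ℕ):ℝ) * (L * B) ≤ (n:ℝ) * (L * B) := by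
      have := mul_le_mul_of_nonneg_right hcast (mul_nonneg hL0 hB)
      linarith [this]
    have hfin : (L * ((n:ℝ)^2 + 2*(n:ℝ)) + 1) * B
        = L * ((n:ℝ) * B) + L * ((n:ℝ)^2 * B) + (n:ℝ) * (L * B) + B := by ring
    have hLB0 : 0 ≤ B := hB
    calc |(U sVal - U (F m)) - ∑ i ∈ Finset.range m, U (F i)
          - ∑ i ∈ Finset.Ico (m+1) n, U (F i)|
        ≤ |U sVal - U (F m)| + |∑ i ∈ Finset.range m, U (F i)|
          + |∑ i ∈ Finset.Ico (m+1) n, U (F i)| := tineq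
      _ ≤ (L * ((n:ℝ) * B) + L * ((n:ℝ)^2 * B)) + (m:ℝ) * (L * B)
          + ((n - (m+1) : ℕ):ℝ) * (L * B) := by rw [← hnsq]; linarith
      _ ≤ (L * ((n:ℝ)^2 + 2*(n:ℝ)) + 1) * B := by rw [hfin]; linarith
end

section
/- There exists $C > 0$ such that for all $\vec w \in [-2,2]^n$: $\big|U'\big(1 + \sum_{k=1}^n(-1)^k(w_k+1)\big) - \sum_{k=1}^n (-1)^k U'(w_k)\big| \le C \max_{1\le i<j\le n} |1 - w_i|\,|1 + w_j|$. -/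
open Set Finset

/-- Key pointwise estimate: `|V(a+b-1) - V(a) - V(b)| ≤ M |1-a||1-b|` on a compact box. -/
lemma aux_key_9 (V : ℝ → ℝ) (hV : ContDiff ℝ (⊤:ℕ∞) V) (hV1 : V 1 = 0) (R : ℝ) (hR : 2 ≤ R) :
    ∃ M, 0 ≤ M ∧ ∀ a ∈ Set.Icc (-R) R, ∀ b ∈ Set.Icc (-R) R,
      |V (a + b - 1) - V a - V b| ≤ M * (|1 - a| * |1 - b|) := by
  have hVd : Differentiable ℝ V := hV.differentiable (by simp)
  have hW : ContDiff ℝ (⊤:ℕ∞) (deriv V) := (contDiff_infty_iff_deriv.mp hV).2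
  have hWd : Differentiable ℝ (deriv V) := hW.differentiable (by simp)
  have hWc : Continuous (deriv (deriv V)) := (contDiff_infty_iff_deriv.mp hW).2.continuous
  obtain ⟨M₁, hM₁⟩ := (isCompact_Icc (a := -(2*R+1)) (b := 2*R+1)).exists_bound_of_continuousOn
    hWc.continuousOn
  set M := max M₁ 0 with hMdef
  have hM0 : 0 ≤ M := le_max_right _ _
  refine ⟨M, hM0, ?_⟩
  intro a ha b hb
  have hmemJ : ∀ x : ℝ, x ∈ Set.Icc (-R) R → x ∈ Set.Icc (-(2*R+1)) (2*R+1) := by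
    intro x hx
    obtain ⟨h1, h2⟩ := hx
    constructor <;> linarith
  -- Lipschitz bound for deriv V on the big interval
  have hWlip : ∀ x ∈ Set.Icc (-(2*R+1)) (2*R+1), ∀ y ∈ Set.Icc (-(2*R+1)) (2*R+1),
      |deriv V x - deriv V y| ≤ M * |x - y| := by
    intro x hx y hy
    have := Convex.norm_image_sub_le_of_norm_deriv_le (f := deriv V)
      (C := M) (s := Set.Icc (-(2*R+1)) (2*R+1))
      (fun z _ => hWd z) (fun z hz => (hM₁ z hz).trans (le_max_left _ _))
      (convex_Icc _ _) hy hx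
    simpa [Real.norm_eq_abs] using this
  -- derivative of the auxiliary function
  have hh : ∀ x : ℝ, HasDerivAt (fun t => V (t + (b-1)) - V t - V b)
      (deriv V (x + (b-1)) - deriv V x) x := by
    intro x
    have h1 : HasDerivAt (fun t => V (t + (b-1))) (deriv V (x + (b-1))) x := by
      simpa [Function.comp_def] using (HasDerivAt.comp x (hVd (x + (b-1))).hasDerivAt
        ((hasDerivAt_id x).add_const (b-1)))
    exact (h1.sub (hVd x).hasDerivAt).sub_const (V b)
  have hbound : ∀ x ∈ Set.Icc (-R) R,
      ‖deriv V (x + (b-1)) - deriv V x‖ ≤ M * |b - 1| := by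
    intro x hx
    have hx1 : x ∈ Set.Icc (-(2*R+1)) (2*R+1) := hmemJ x hx
    have hx2 : x + (b-1) ∈ Set.Icc (-(2*R+1)) (2*R+1) := by
      obtain ⟨h1, h2⟩ := hx
      obtain ⟨h3, h4⟩ := hb
      exact Set.mem_Icc.mpr ⟨by linarith, by linarith⟩
    have := hWlip _ hx2 _ hx1
    simpa [Real.norm_eq_abs, add_sub_cancel_left] using this
  have h1mem : (1:ℝ) ∈ Set.Icc (-R) R := ⟨by linarith, by linarith⟩
  have key := (convex_Icc (-R) R).norm_image_sub_le_of_norm_hasDerivWithin_le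
    (f := fun t => V (t + (b-1)) - V t - V b)
    (f' := fun x => deriv V (x + (b-1)) - deriv V x)
    (fun x _ => (hh x).hasDerivWithinAt) hbound h1mem ha
  simp only [Real.norm_eq_abs] at key
  have heval : V (1 + (b-1)) - V 1 - V b = 0 := by
    have h0 : (1:ℝ) + (b-1) = b := by ring
    rw [h0, hV1]; ring
  rw [heval, sub_zero] at key
  have habs : |V (a + (b-1)) - V a - V b| ≤ M * |b - 1| * |a - 1| := key
  have heq : a + (b-1) = a + b - 1 := by ring
  rw [heq] at habs
  calc |V (a + b - 1) - V a - V b| ≤ M * |b - 1| * |a - 1| := habs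
    _ = M * (|1 - a| * |1 - b|) := by rw [abs_sub_comm b 1, abs_sub_comm a 1]; ring

/-- Main induction, formulated for an odd smooth `V` with `V 1 = 0`. -/
lemma aux_main_9 (V : ℝ → ℝ) (hV : ContDiff ℝ (⊤:ℕ∞) V) (hodd : ∀ y, V (-y) = -V y)
    (hV1 : V 1 = 0) :
    ∀ n : ℕ, ∃ C > 0, ∀ w : Fin n → ℝ, (∀ k, w k ∈ Set.Icc (-2:ℝ) 2) →
      ∀ B : ℝ, 0 ≤ B →
        (∀ i j : Fin n, i < j → |1 - w i| * |1 + w j| ≤ B) →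
        |V (1 + ∑ k : Fin n, (-1:ℝ)^((k:ℕ)+1) * (w k + 1))
            - ∑ k : Fin n, (-1:ℝ)^((k:ℕ)+1) * V (w k)| ≤ C * B := by
  intro n
  induction n with
  | zero =>
    refine ⟨1, one_pos, ?_⟩
    intro w hw B hB hprod
    simp [hV1, hB]
  | succ n ih =>
    obtain ⟨C, hC, hIH⟩ := ih
    have hR : (2:ℝ) ≤ 3*(n:ℝ)+3 := by
      have : (0:ℝ) ≤ (n:ℝ) := Nat.cast_nonneg n
      linarith
    obtain ⟨M, hM, hkey⟩ := aux_key_9 V hV hV1 (3*(n:ℝ)+3) hR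
    refine ⟨C + M * n + 1, by positivity, ?_⟩
    intro w hw B hB hprod
    set w' : Fin n → ℝ := fun j => w j.succ with hw'def
    set T : ℝ := 1 + ∑ j : Fin n, (-1:ℝ)^((j:ℕ)+1) * (w' j + 1) with hTdef
    set D : ℝ := ∑ j : Fin n, (-1:ℝ)^((j:ℕ)+1) * V (w' j) with hDdef
    have hIH' : |V T - D| ≤ C * B := by
      refine hIH w' (fun k => hw k.succ) B hB ?_
      intro i j hij
      exact hprod i.succ j.succ (Fin.succ_lt_succ_iff.mpr hij)
    -- rewrite the sums
    have hsum1 : (1 + ∑ k : Fin (n+1), (-1:ℝ)^((k:ℕ)+1) * (w k + 1)) = -(w 0 + T - 1) := by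
      rw [Fin.sum_univ_succ]
      have : ∀ j : Fin n, (-1:ℝ)^(((j.succ):ℕ)+1) * (w j.succ + 1)
          = -((-1:ℝ)^((j:ℕ)+1) * (w' j + 1)) := by
        intro j
        simp only [Fin.val_succ, hw'def, pow_succ]
        ring
      rw [Finset.sum_congr rfl (fun j _ => this j), Finset.sum_neg_distrib]
      simp only [hTdef, Fin.val_zero, pow_one]
      ring
    have hsum2 : (∑ k : Fin (n+1), (-1:ℝ)^((k:ℕ)+1) * V (w k)) = -V (w 0) - D := by
      rw [Fin.sum_univ_succ]
      have : ∀ j : Fin n, (-1:ℝ)^(((j.succ):ℕ)+1) * V (w j.succ)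
          = -((-1:ℝ)^((j:ℕ)+1) * V (w' j)) := by
        intro j
        simp only [Fin.val_succ, hw'def, pow_succ]
        ring
      rw [Finset.sum_congr rfl (fun j _ => this j), Finset.sum_neg_distrib]
      simp only [hDdef, Fin.val_zero, pow_one]
      ring
    rw [hsum1, hsum2, hodd (w 0 + T - 1)]
    -- bound |1 - T|
    have hT1 : |1 - T| ≤ ∑ j : Fin n, |1 + w' j| := by
      have : 1 - T = ∑ j : Fin n, -((-1:ℝ)^((j:ℕ)+1) * (w' j + 1)) := by
        rw [hTdef, Finset.sum_neg_distrib]; ring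
      rw [this]
      refine (Finset.abs_sum_le_sum_abs _ _).trans ?_
      refine Finset.sum_le_sum (fun j _ => ?_)
      rw [abs_neg, abs_mul, abs_pow, abs_neg, abs_one, one_pow, one_mul]
      have : w' j + 1 = 1 + w' j := by ring
      rw [this]
    -- product bound
    have hprodT : |1 - w 0| * |1 - T| ≤ (n:ℝ) * B := by
      calc |1 - w 0| * |1 - T| ≤ |1 - w 0| * ∑ j : Fin n, |1 + w' j| :=
            mul_le_mul_of_nonneg_left hT1 (abs_nonneg _)
        _ = ∑ j : Fin n, |1 - w 0| * |1 + w' j| := by rw [Finset.mul_sum]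
        _ ≤ ∑ _j : Fin n, B := by
            refine Finset.sum_le_sum (fun j _ => ?_)
            exact hprod 0 j.succ (Fin.succ_pos j)
        _ = (n:ℝ) * B := by simp [mul_comm]
    -- memberships
    have hw0mem : w 0 ∈ Set.Icc (-(3*(n:ℝ)+3)) (3*(n:ℝ)+3) := by
      obtain ⟨h1, h2⟩ := hw 0
      have : (0:ℝ) ≤ (n:ℝ) := Nat.cast_nonneg n
      exact Set.mem_Icc.mpr ⟨by linarith, by linarith⟩
    have hTmem : T ∈ Set.Icc (-(3*(n:ℝ)+3)) (3*(n:ℝ)+3) := by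
      have h1 : |T - 1| ≤ 3 * (n:ℝ) := by
        have h2 : |T - 1| = |1 - T| := abs_sub_comm T 1
        rw [h2]
        refine hT1.trans ?_
        calc (∑ j : Fin n, |1 + w' j|) ≤ ∑ _j : Fin n, (3:ℝ) := by
              refine Finset.sum_le_sum (fun j _ => ?_)
              obtain ⟨h3, h4⟩ := hw j.succ
              rw [abs_le]; constructor <;> simp only [hw'def] <;> linarith
          _ = 3 * (n:ℝ) := by simp [mul_comm]
      rw [abs_le] at h1
      obtain ⟨h2, h3⟩ := h1
      exact Set.mem_Icc.mpr ⟨by linarith, by linarith⟩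
    have hkey' := hkey (w 0) hw0mem T hTmem
    -- combine
    have hcomb : |(-V (w 0 + T - 1)) - (-V (w 0) - D)|
        ≤ |V (w 0 + T - 1) - V (w 0) - V T| + |V T - D| := by
      have : (-V (w 0 + T - 1)) - (-V (w 0) - D)
          = -((V (w 0 + T - 1) - V (w 0) - V T)) - (V T - D) := by ring
      rw [this]
      calc |(-((V (w 0 + T - 1) - V (w 0) - V T)) - (V T - D))|
          ≤ |(-((V (w 0 + T - 1) - V (w 0) - V T)))| + |V T - D| := abs_sub _ _
        _ = |V (w 0 + T - 1) - V (w 0) - V T| + |V T - D| := by rw [abs_neg]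
    refine hcomb.trans ?_
    have hkey'' : |V (w 0 + T - 1) - V (w 0) - V T| ≤ M * ((n:ℝ) * B) :=
      hkey'.trans (mul_le_mul_of_nonneg_left hprodT hM)
    nlinarith [hIH', hkey'', hB, hM]

/-- There exists `C > 0` (depending on `n` and `U`) such that for all `w ∈ [-2,2]ⁿ`,
`|U'(1 + ∑ (-1)^k (w_k+1)) - ∑ (-1)^k U'(w_k)| ≤ C max_{i<j} |1-w_i||1+w_j|`.
The maximum is encoded as: the bound holds with `C·B` for every nonnegative `B` dominating
all the products `|1-w_i||1+w_j|`, `i < j`. -/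
theorem stmt_9 (U : ℝ → ℝ) (hU : ContDiff ℝ (⊤ : ℕ∞) U)
    (hUeven : ∀ y, U (-y) = U y)
    (hU1 : U 1 = 0) (hUm1 : U (-1) = 0)
    (hU'1 : deriv U 1 = 0) (hU'm1 : deriv U (-1) = 0)
    (n : ℕ) (hn : 1 ≤ n) :
    ∃ C > 0, ∀ w : Fin n → ℝ, (∀ k, w k ∈ Set.Icc (-2:ℝ) 2) →
      ∀ B : ℝ, 0 ≤ B →
        (∀ i j : Fin n, i < j → |1 - w i| * |1 + w j| ≤ B) →
        |deriv U (1 + ∑ k : Fin n, (-1:ℝ)^((k:ℕ)+1) * (w k + 1))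
            - ∑ k : Fin n, (-1:ℝ)^((k:ℕ)+1) * deriv U (w k)|
          ≤ C * B := by
  have hV : ContDiff ℝ (⊤:ℕ∞) (deriv U) := (contDiff_infty_iff_deriv.mp (hU.of_le (by simp))).2
  have hodd : ∀ y, deriv U (-y) = -(deriv U y) := by
    intro y
    have hfe : (fun y => U (-y)) = U := funext hUeven
    have h := deriv_comp_neg (f := U) (x := y)
    rw [hfe] at h
    linarith
  exact aux_main_9 (deriv U) hV hodd hU'1 n
end

section
/- Let $\Delta^{(n)}$ be the $(n-1)\times(n-1)$ discrete Dirichlet Laplacian ($2$ on the diagonal, $-1$ on the off-diagonals), $\vec\sigma$ with $\sigma_k = k(n-k)/2$, $\vec 1 = (1,\dots,1)$, and $\mu_0 = 1/(\vec\sigma\cdot\vec 1) = 12/((n+1)n(n-1))$. Let $P_\sigma$ denote orthogonal projection onto $\{\vec z : \vec\sigma \cdot \vec z = 0\}$. Then $\Delta^{(n)}$ is positive definite, and there exists $\mu_1 > 0$ such that for all $\vec y \in \mathbb{R}^{n-1}$: $\vec y \cdot (\Delta^{(n)} \vec y) - \mu_0 (\vec 1 \cdot \vec y)^2 \ge \mu_1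 |P_\sigma \vec y|^2$. -/
open Matrix Finset Metric

/-!
Since `Δ σ = 𝟙` and `σ ⬝ᵥ 𝟙 = 1 / μ₀`, the right-hand side is `y·Δy - (σ·Δy)² / (σ·Δσ)`, the
squared `Δ`-norm of the `Δ`-orthogonal residual `w = y - t σ` of `y` along `σ`. The summation by
parts `y·Δy = ∑ (y_{k+1} - y_k)²` (with `y_0 = y_n = 0`) makes `Δ` positive definite, so
`w·Δw ≥ μ₁ |w|²` by compactness of the unit sphere, and `|w|² ≥ |P_σ y|²` because `P_σ y` is the
point of the line `y + ℝ σ` closest to the origin.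
-/

theorem exists_pos_mul_norm_sq_le {E : Type*} [NormedAddCommGroup E] [NormedSpace ℝ E]
    [FiniteDimensional ℝ E] {q : E → ℝ} (hq : Continuous q)
    (hsmul : ∀ (t : ℝ) x, q (t • x) = t ^ 2 * q x) (hpos : ∀ x ≠ 0, 0 < q x) :
    ∃ c > 0, ∀ x, c * ‖x‖ ^ 2 ≤ q x := by
  have hq0 : q 0 = 0 := by simpa using hsmul 0 0
  rcases subsingleton_or_nontrivial E with hE | hE
  · exact ⟨1, one_pos, fun x => by simp [Subsingleton.elim x 0, hq0]⟩
  obtain ⟨u, hu, hmin⟩ := (isCompact_sphere (0 : E) 1).exists_isMinOn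
    (NormedSpace.sphere_nonempty.mpr zero_le_one) hq.continuousOn
  refine ⟨q u, hpos u (ne_zero_of_mem_unit_sphere ⟨u, hu⟩), fun x => ?_⟩
  rcases eq_or_ne x 0 with rfl | hx
  · simp [hq0]
  have hx' : ‖x‖⁻¹ • x ∈ sphere (0 : E) 1 := by simp [norm_smul, hx]
  calc q u * ‖x‖ ^ 2 ≤ q (‖x‖⁻¹ • x) * ‖x‖ ^ 2 := by gcongr; exact hmin hx'
    _ = q x := by rw [hsmul]; field_simp

section Projection

variable {ι : Type*} [Fintype ι]

theorem Matrix.PosDef.exists_pos_mul_dotProduct_self_le {A : Matrix ι ι ℝ} (hA : A.PosDef) :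
    ∃ c > 0, ∀ x, c * (x ⬝ᵥ x) ≤ x ⬝ᵥ A *ᵥ x := by
  obtain ⟨c, hc, hle⟩ := exists_pos_mul_norm_sq_le (E := EuclideanSpace ℝ ι)
    (q := fun v => v.ofLp ⬝ᵥ A *ᵥ v.ofLp) (by fun_prop)
    (fun t x => by simp [mulVec_smul]; ring)
    (fun x hx => by simpa using hA.dotProduct_mulVec_pos (x := x.ofLp) (by simpa using hx))
  refine ⟨c, hc, fun x => ?_⟩
  have hx := hle (WithLp.toLp 2 x)
  rw [EuclideanSpace.real_norm_sq_eq] at hx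
  simpa [dotProduct, sq] using hx

theorem sum_sq_sub_proj_le (s y : ι → ℝ) (t : ℝ) :
    ∑ k, (y k - (∑ j, s j * y j) / (∑ j, s j ^ 2) * s k) ^ 2 ≤ ∑ k, (y k - t * s k) ^ 2 := by
  set P := ∑ j, s j * y j
  set S := ∑ j, s j ^ 2
  have hexpand : ∀ c : ℝ, ∑ k, (y k - c * s k) ^ 2 = ∑ k, y k ^ 2 - 2 * c * P + c ^ 2 * S := by
    intro c
    simp only [P, S, mul_sum, ← sum_sub_distrib, ← sum_add_distrib]
    exact sum_congr rfl fun _ _ => by ring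
  have hCS : P ^ 2 ≤ S * ∑ k, y k ^ 2 := sum_mul_sq_le_sq_mul_sq _ s y
  rw [hexpand, hexpand]
  obtain hS | hS := (show 0 ≤ S from sum_nonneg fun j _ => sq_nonneg (s j)).eq_or_lt
  · have hP : P = 0 := by
      rw [← hS, zero_mul] at hCS
      exact pow_eq_zero_iff two_ne_zero |>.1 (le_antisymm hCS (sq_nonneg P))
    simp [← hS, hP]
  · have hgap : ∑ k, y k ^ 2 - 2 * t * P + t ^ 2 * S
        - (∑ k, y k ^ 2 - 2 * (P / S) * P + (P / S) ^ 2 * S) = (t * S - P) ^ 2 / S := by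
      field_simp; ring
    have : 0 ≤ (t * S - P) ^ 2 / S := by positivity
    linarith

theorem Matrix.IsSymm.dotProduct_mulVec_comm {A : Matrix ι ι ℝ} (hA : A.IsSymm) (x y : ι → ℝ) :
    x ⬝ᵥ A *ᵥ y = y ⬝ᵥ A *ᵥ x := by
  rw [dotProduct_mulVec, ← mulVec_transpose, hA.eq, dotProduct_comm]

theorem Matrix.IsSymm.dotProduct_mulVec_sub_smul {A : Matrix ι ι ℝ} (hA : A.IsSymm) (s y : ι → ℝ) :
    (y - ((s ⬝ᵥ A *ᵥ y) / (s ⬝ᵥ A *ᵥ s)) • s) ⬝ᵥ A *ᵥ (y - ((s ⬝ᵥ A *ᵥ y) / (s ⬝ᵥ A *ᵥ s)) • s)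
      = y ⬝ᵥ A *ᵥ y - (s ⬝ᵥ A *ᵥ y) ^ 2 / (s ⬝ᵥ A *ᵥ s) := by
  simp only [mulVec_sub, mulVec_smul, dotProduct_sub, sub_dotProduct, dotProduct_smul,
    smul_dotProduct, smul_eq_mul, hA.dotProduct_mulVec_comm y s]
  rcases eq_or_ne (s ⬝ᵥ A *ᵥ s) 0 with hd | hd
  · simp [hd]
  · field_simp; ring

theorem Matrix.PosDef.exists_pos_mul_sum_sq_sub_proj_le {A : Matrix ι ι ℝ} (hA : A.PosDef)
    (s : ι → ℝ) : ∃ μ > 0, ∀ y : ι → ℝ,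
      μ * ∑ k, (y k - (∑ j, s j * y j) / (∑ j, s j ^ 2) * s k) ^ 2
        ≤ y ⬝ᵥ A *ᵥ y - (s ⬝ᵥ A *ᵥ y) ^ 2 / (s ⬝ᵥ A *ᵥ s) := by
  obtain ⟨c, hc, hle⟩ := hA.exists_pos_mul_dotProduct_self_le
  refine ⟨c, hc, fun y => ?_⟩
  set w := y - ((s ⬝ᵥ A *ᵥ y) / (s ⬝ᵥ A *ᵥ s)) • s
  have hsymm : A.IsSymm := by simpa using hA.isHermitian
  calc c * ∑ k, (y k - (∑ j, s j * y j) / (∑ j, s j ^ 2) * s k) ^ 2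
      ≤ c * (w ⬝ᵥ w) := by
        gcongr
        simpa [w, dotProduct, sq] using sum_sq_sub_proj_le s y _
    _ ≤ w ⬝ᵥ A *ᵥ w := hle w
    _ = _ := hsymm.dotProduct_mulVec_sub_smul s y

end Projection

def dirichletLaplacian (m : ℕ) : Matrix (Fin m) (Fin m) ℝ := fun i j =>
  if (i : ℕ) = (j : ℕ) then 2
  else if (i : ℕ) + 1 = (j : ℕ) ∨ (j : ℕ) + 1 = (i : ℕ) then -1 else 0

theorem sum_range_mul_secondDiff (a : ℕ → ℝ) (m : ℕ) :
    ∑ k ∈ range m, a (k + 1) * (2 * a (k + 1) - a (k + 2) - a k)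
      = ∑ k ∈ range (m + 1), (a (k + 1) - a k) ^ 2
        - a (m + 1) * (a (m + 1) - a m) - a 0 * (a 0 - a 1) := by
  induction m with
  | zero => simp; ring
  | succ m ih => rw [sum_range_succ, sum_range_succ _ (m + 1), ih]; ring

theorem dirichletLaplacian_mulVec {m : ℕ} {a : ℕ → ℝ} (h0 : a 0 = 0) (hm : a (m + 1) = 0)
    (i : Fin m) :
    (dirichletLaplacian m *ᵥ fun j => a (j + 1)) i = 2 * a (i + 1) - a (i + 2) - a i := by
  have hi := i.isLt
  simp only [mulVec, dotProduct, dirichletLaplacian]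
  rw [Fin.sum_univ_eq_sum_range (fun t => (if (i : ℕ) = t then (2 : ℝ)
    else if (i : ℕ) + 1 = t ∨ t + 1 = (i : ℕ) then -1 else 0) * a (t + 1))]
  have hsplit : ∀ t, (if (i : ℕ) = t then (2 : ℝ)
      else if (i : ℕ) + 1 = t ∨ t + 1 = (i : ℕ) then -1 else 0) * a (t + 1)
      = (if t = i then 2 * a (t + 1) else 0) - (if t = i + 1 then a (t + 1) else 0)
        - (if t + 1 = i then a (t + 1) else 0) := by
    intro t; split_ifs <;> first | (exfalso; omega) | ring
  simp only [hsplit, sum_sub_distrib, sum_ite_eq', mem_range, if_pos hi]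
  congr 1
  · congr 1
    split_ifs with h
    · rfl
    · rw [show (i : ℕ) + 2 = m + 1 by omega, hm]
  · rcases i with ⟨_ | k, hk⟩
    · simp [h0]
    · simp [Nat.lt_of_succ_lt hk]

theorem dotProduct_dirichletLaplacian_mulVec {m : ℕ} {a : ℕ → ℝ} (h0 : a 0 = 0)
    (hm : a (m + 1) = 0) :
    (fun j : Fin m => a (j + 1)) ⬝ᵥ dirichletLaplacian m *ᵥ (fun j => a (j + 1))
      = ∑ k ∈ range (m + 1), (a (k + 1) - a k) ^ 2 := by
  simp only [dotProduct, dirichletLaplacian_mulVec h0 hm]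
  rw [Fin.sum_univ_eq_sum_range (fun k => a (k + 1) * (2 * a (k + 1) - a (k + 2) - a k)),
    sum_range_mul_secondDiff, h0, hm]
  ring

theorem eq_zero_of_sum_range_sq_sub_eq_zero {a : ℕ → ℝ} {m : ℕ} (h0 : a 0 = 0)
    (h : ∑ k ∈ range m, (a (k + 1) - a k) ^ 2 = 0) {k : ℕ} (hk : k ≤ m) : a k = 0 := by
  have hstep : ∀ i ∈ range k, a (i + 1) - a i = 0 := fun i hi =>
    pow_eq_zero_iff two_ne_zero |>.1 <| (sum_eq_zero_iff_of_nonneg fun _ _ => sq_nonneg _).1 h i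
      (by simp at hi ⊢; omega)
  simpa [sum_eq_zero hstep, h0, sub_eq_zero, eq_comm] using sum_range_sub a k

theorem dirichletLaplacian_isSymm (m : ℕ) : (dirichletLaplacian m).IsSymm :=
  IsSymm.ext fun i j => by
    simp only [dirichletLaplacian]
    split_ifs <;> first | rfl | (exfalso; omega)

theorem posDef_dirichletLaplacian (m : ℕ) : (dirichletLaplacian m).PosDef := by
  refine .of_dotProduct_mulVec_pos (by simpa using dirichletLaplacian_isSymm m) fun x hx0 => ?_
  set a : ℕ → ℝ := Function.extend (fun i : Fin m => (i : ℕ) + 1) x 0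
  have hinj : Function.Injective (fun i : Fin m => (i : ℕ) + 1) := fun i j h =>
    Fin.ext (by simpa using h)
  have hx : x = fun j : Fin m => a (j + 1) := funext fun j => (hinj.extend_apply x 0 j).symm
  have h0 : a 0 = 0 := Function.extend_apply' _ _ _ (by simp)
  have hm : a (m + 1) = 0 := Function.extend_apply' _ _ _ (by rintro ⟨i, hi⟩; simp at hi; omega)
  rw [star_trivial, hx, dotProduct_dirichletLaplacian_mulVec h0 hm]
  refine (sum_nonneg fun _ _ => sq_nonneg _).lt_of_ne fun hsum => hx0 ?_
  rw [hx]
  funext j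
  exact eq_zero_of_sum_range_sq_sub_eq_zero h0 hsum.symm (by omega)

theorem dirichletLaplacian_mulVec_parabola {n : ℕ} (hn : 1 ≤ n) :
    dirichletLaplacian (n - 1) *ᵥ
      (fun k : Fin (n - 1) => (((k : ℕ) : ℝ) + 1) * ((n : ℝ) - (((k : ℕ) : ℝ) + 1)) / 2) = 1 := by
  set a : ℕ → ℝ := fun k => k * (n - k) / 2
  have h0 : a 0 = 0 := by simp [a]
  have hm : a (n - 1 + 1) = 0 := by simp [a, Nat.sub_add_cancel hn]
  have hσ : (fun k : Fin (n - 1) => (((k : ℕ) : ℝ) + 1) * ((n : ℝ) - (((k : ℕ) : ℝ) + 1)) / 2)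
      = fun k : Fin (n - 1) => a (k + 1) := by
    funext k; simp [a]
  ext i
  rw [hσ, dirichletLaplacian_mulVec h0 hm]
  simp only [a, Pi.one_apply]
  push_cast
  ring

theorem sum_range_succ_mul_sub_succ (x : ℝ) (M : ℕ) :
    ∑ k ∈ range M, ((k : ℝ) + 1) * (x - ((k : ℝ) + 1)) = M * (M + 1) * (3 * x - 2 * M - 1) / 6 := by
  induction M with
  | zero => simp
  | succ M ih => rw [sum_range_succ, ih]; push_cast; ring

theorem sum_parabola {n : ℕ} (hn : 1 ≤ n) :
    ∑ k : Fin (n - 1), (((k : ℕ) : ℝ) + 1) * ((n : ℝ) - (((k : ℕ) : ℝ) + 1)) / 2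
      = ((n : ℝ) + 1) * n * (n - 1) / 12 := by
  rw [Fin.sum_univ_eq_sum_range (fun k => ((k : ℝ) + 1) * ((n : ℝ) - ((k : ℝ) + 1)) / 2),
    ← sum_div, sum_range_succ_mul_sub_succ, Nat.cast_sub hn]
  push_cast
  ring

/-- The discrete Dirichlet Laplacian `Δ⁽ⁿ⁾` is positive definite, and with
`μ₀ = 12/((n+1)n(n-1))` there is `μ₁ > 0` such that for all `y`,
`y·(Δ⁽ⁿ⁾y) - μ₀ (𝟙·y)² ≥ μ₁ |P_σ y|²`, where `P_σ` is the orthogonal projection onto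
the hyperplane orthogonal to `σ`, `σ_k = k(n-k)/2`. -/
theorem stmt_11 (n : ℕ) (hn : 2 ≤ n) :
    let Δ : Matrix (Fin (n-1)) (Fin (n-1)) ℝ := fun i j =>
      if (i:ℕ) = (j:ℕ) then 2
      else if (i:ℕ) + 1 = (j:ℕ) ∨ (j:ℕ) + 1 = (i:ℕ) then -1 else 0
    let σ : Fin (n-1) → ℝ := fun k => (((k:ℕ):ℝ) + 1) * ((n:ℝ) - (((k:ℕ):ℝ) + 1)) / 2
    let μ₀ : ℝ := 12 / (((n:ℝ) + 1) * (n:ℝ) * ((n:ℝ) - 1))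
    Δ.PosDef ∧
    ∃ μ₁ > 0, ∀ y : Fin (n-1) → ℝ,
      μ₁ * ∑ k, (y k - ((∑ j, σ j * y j) / (∑ j, σ j ^ 2)) * σ k) ^ 2
        ≤ y ⬝ᵥ Δ.mulVec y - μ₀ * (∑ k, y k) ^ 2 := by
  intro Δ σ μ₀
  have hΔ : Δ.PosDef := posDef_dirichletLaplacian (n - 1)
  have hsymm : Δ.IsSymm := dirichletLaplacian_isSymm (n - 1)
  have hΔσ : Δ *ᵥ σ = 1 := dirichletLaplacian_mulVec_parabola (by omega)
  have hσΔ : ∀ y, σ ⬝ᵥ Δ *ᵥ y = ∑ k, y k := fun y => by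
    rw [hsymm.dotProduct_mulVec_comm, hΔσ, dotProduct_one]
  obtain ⟨μ₁, hμ₁, hle⟩ := hΔ.exists_pos_mul_sum_sq_sub_proj_le σ
  refine ⟨hΔ, μ₁, hμ₁, fun y => (hle y).trans_eq ?_⟩
  rw [hσΔ, hσΔ, sum_parabola (by omega), div_div_eq_mul_div]
  ring
end

section
/- With notation as in the previous statement, there exists $C > 0$ such that for all $\vec z \in \Pi$: $C^{-1} |P_\sigma e^{-\vec z}|^2 \le (\vec 1 \cdot e^{-\vec z})\big(\vec 1 \cdot e^{-\vec z} - \vec 1 \cdot e^{-\vec z_{cr}}\big) \le C |P_\sigma e^{-\vec z}|^2$, where $P_\sigma$ is the orthogonal projection onto $\Pi = \{\vec z : \vec\sigma\cdot\vec z = 0\}$. -/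
/-!
Write `e^{-z_k} = λ_cr σ_k x_k`. The constraint `σ·z = 0` becomes `∑ σ_k log x_k = 0`: the
`σ`-weighted geometric mean of `x` is `1`. With `s = ∑ σ_k`, `S = ∑ σ_k x_k` and `A = S / s` the
weighted arithmetic mean, the middle quantity is `λ_cr² S (S - s) = λ_cr² s² A (A - 1)`, while
`‖P_σ e^{-z}‖² = min_c ∑ σ_k² (λ_cr x_k - c)²` is, since `σ` is bounded below, comparable to
`λ_cr²` times a weighted variance of `x`. So the theorem is a two-sided stability estimate for the
weighted AM–GM inequality.

Since `∑ σ_k (x_k - 1 - log x_k) = S - s`, the bound `(t - 1)² ≤ 2 (t + 1) (t - 1 - log t)` gives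
`∑ σ_k (x_k - 1)² ≲ S (S - s)`. Conversely, if some `x_j < A / 2` the variance is already of order
`A²`; otherwise `t - 1 - log t ≤ 2 (t - 1)²` at `t = x_k / A` gives `s log A ≲ Var / A²`, and
`A (A - 1) ≤ A² log A`.
-/

open Finset Real

lemma sub_one_sub_log_le_two_mul_sq {t : ℝ} (ht : 1 / 2 ≤ t) :
    t - 1 - log t ≤ 2 * (t - 1) ^ 2 := by
  have ht0 : 0 < t := by linarith
  have hinv : -log t ≤ t⁻¹ - 1 := by
    simpa only [log_inv] using log_le_sub_one_of_pos (inv_pos.2 ht0)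
  have hmul : t * t⁻¹ = 1 := mul_inv_cancel₀ ht0.ne'
  nlinarith [sq_nonneg (t - 1), mul_le_mul_of_nonneg_left hinv ht0.le]

lemma sq_sub_one_le_two_mul_add_one_mul {t : ℝ} (ht : 0 < t) :
    (t - 1) ^ 2 ≤ 2 * (t + 1) * (t - 1 - log t) := by
  -- `log u ≤ u - 1` at `u = √t`
  set u := √t
  have hu : 0 < u := sqrt_pos.2 ht
  have hut : u ^ 2 = t := sq_sqrt ht.le
  have hlog : log t = 2 * log u := by rw [← hut, log_pow]; norm_num
  have h := log_le_sub_one_of_pos hu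
  nlinarith [sq_nonneg (u - 1), sq_nonneg (u + 1), sq_nonneg ((u - 1) * (u + 1)),
    sq_nonneg (u * (u - 1))]

/-- `‖P_σ w‖²`, where `P_σ` is the orthogonal projection onto the hyperplane `σ⊥`. -/
noncomputable def normSqOrthProj {ι : Type*} [Fintype ι] (σ w : ι → ℝ) : ℝ :=
  ∑ k, (w k - ((∑ j, σ j * w j) / ∑ j, σ j ^ 2) * σ k) ^ 2

lemma two_mul_mul_sub_sq_mul_le {B T : ℝ} (hT : 0 < T) (c : ℝ) :
    2 * c * B - c ^ 2 * T ≤ 2 * (B / T) * B - (B / T) ^ 2 * T := by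
  have hB : 2 * (B / T) * B - (B / T) ^ 2 * T = B ^ 2 / T := by field_simp; ring
  rw [hB, le_div_iff₀ hT]
  nlinarith [sq_nonneg (B - c * T)]

section

variable {ι : Type*} [Fintype ι]

lemma normSqOrthProj_le (σ w : ι → ℝ) (hσ : 0 < ∑ k, σ k ^ 2) (c : ℝ) :
    normSqOrthProj σ w ≤ ∑ k, (w k - c * σ k) ^ 2 := by
  have expand : ∀ d : ℝ, ∑ k, (w k - d * σ k) ^ 2
      = ∑ k, w k ^ 2 - (2 * d * ∑ k, σ k * w k - d ^ 2 * ∑ k, σ k ^ 2) := fun d => by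
    simp only [mul_sum, ← sum_sub_distrib]
    exact sum_congr rfl fun k _ => by ring
  rw [normSqOrthProj, expand, expand]
  linarith [two_mul_mul_sub_sq_mul_le (B := ∑ k, σ k * w k) hσ c]

lemma sum_mul_sq_sub_div_le (σ x : ι → ℝ) (hσ : 0 < ∑ k, σ k) (c : ℝ) :
    ∑ k, σ k * (x k - (∑ j, σ j * x j) / ∑ j, σ j) ^ 2 ≤ ∑ k, σ k * (x k - c) ^ 2 := by
  have expand : ∀ d : ℝ, ∑ k, σ k * (x k - d) ^ 2
      = ∑ k, σ k * x k ^ 2 - (2 * d * ∑ k, σ k * x k - d ^ 2 * ∑ k, σ k) := fun d => by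
    simp only [mul_sum, ← sum_sub_distrib]
    exact sum_congr rfl fun k _ => by ring
  rw [expand, expand]
  linarith [two_mul_mul_sub_sq_mul_le (B := ∑ k, σ k * x k) hσ c]

lemma sum_mul_sub_one_sub_log_eq (σ x : ι → ℝ) (hlog : ∑ k, σ k * log (x k) = 0) :
    ∑ k, σ k * (x k - 1 - log (x k)) = ∑ k, σ k * x k - ∑ k, σ k := by
  simp only [mul_sub, mul_one, sum_sub_distrib, hlog, sub_zero]

lemma sum_le_sum_mul_of_sum_mul_log_eq_zero (σ x : ι → ℝ) (hσ : ∀ k, 0 ≤ σ k)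
    (hx : ∀ k, 0 < x k) (hlog : ∑ k, σ k * log (x k) = 0) :
    ∑ k, σ k ≤ ∑ k, σ k * x k := by
  have h : 0 ≤ ∑ k, σ k * (x k - 1 - log (x k)) := sum_nonneg fun k _ =>
    mul_nonneg (hσ k) (by linarith [log_le_sub_one_of_pos (hx k)])
  linarith [sum_mul_sub_one_sub_log_eq σ x hlog]

lemma sum_mul_sq_sub_one_le [Nonempty ι] (σ x : ι → ℝ) {m : ℝ} (hm : 0 < m)
    (hσ : ∀ k, m ≤ σ k) (hx : ∀ k, 0 < x k) (hlog : ∑ k, σ k * log (x k) = 0) :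
    ∑ k, σ k * (x k - 1) ^ 2
      ≤ 4 / m * ((∑ k, σ k * x k) * (∑ k, σ k * x k - ∑ k, σ k)) := by
  set S := ∑ k, σ k * x k
  have hσ0 : ∀ k, 0 ≤ σ k := fun k => hm.le.trans (hσ k)
  have hσx : ∀ k, σ k * x k ≤ S := fun k =>
    single_le_sum (f := fun k => σ k * x k) (fun k _ => mul_nonneg (hσ0 k) (hx k).le) (mem_univ k)
  have hmS : m ≤ S := by
    obtain ⟨k⟩ := ‹Nonempty ι›
    exact (hσ k).trans ((single_le_sum (fun k _ => hσ0 k) (mem_univ k)).trans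
      (sum_le_sum_mul_of_sum_mul_log_eq_zero σ x hσ0 hx hlog))
  have hx_le : ∀ k, 2 * (x k + 1) ≤ 4 / m * S := fun k => by
    have h1 : m * x k ≤ S := (mul_le_mul_of_nonneg_right (hσ k) (hx k).le).trans (hσx k)
    rw [div_mul_eq_mul_div, le_div_iff₀ hm]
    linarith
  calc ∑ k, σ k * (x k - 1) ^ 2
      ≤ ∑ k, σ k * (2 * (x k + 1) * (x k - 1 - log (x k))) :=
        sum_le_sum fun k _ =>
          mul_le_mul_of_nonneg_left (sq_sub_one_le_two_mul_add_one_mul (hx k)) (hσ0 k)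
    _ ≤ ∑ k, 4 / m * S * (σ k * (x k - 1 - log (x k))) := by
        refine sum_le_sum fun k _ => ?_
        have hφ : 0 ≤ x k - 1 - log (x k) := by linarith [log_le_sub_one_of_pos (hx k)]
        nlinarith [mul_le_mul_of_nonneg_right (hx_le k) (mul_nonneg (hσ0 k) hφ)]
    _ = 4 / m * (S * (S - ∑ k, σ k)) := by
        rw [← mul_sum, sum_mul_sub_one_sub_log_eq σ x hlog, mul_assoc]

lemma sum_mul_div_sub_add_mul_log_le (σ x : ι → ℝ) (hσ : ∀ k, 0 ≤ σ k)
    (hlog : ∑ k, σ k * log (x k) = 0) {a : ℝ} (ha : 0 < a) (hx : ∀ k, a / 2 ≤ x k) :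
    (∑ k, σ k * x k) / a - ∑ k, σ k + (∑ k, σ k) * log a
      ≤ 2 / a ^ 2 * ∑ k, σ k * (x k - a) ^ 2 := by
  have hx0 : ∀ k, 0 < x k := fun k => by linarith [hx k]
  have hlhs : (∑ k, σ k * x k) / a - ∑ k, σ k + (∑ k, σ k) * log a
      = ∑ k, σ k * (x k / a - 1 - log (x k / a)) := by
    simp only [log_div (hx0 _).ne' ha.ne', mul_sub, mul_one, sum_sub_distrib, hlog, sum_div,
      mul_div_assoc, sum_mul]
    ring
  rw [hlhs, mul_sum]
  refine sum_le_sum fun k _ => ?_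
  have ht : 1 / 2 ≤ x k / a := by rw [le_div_iff₀ ha]; linarith [hx k]
  calc σ k * (x k / a - 1 - log (x k / a)) ≤ σ k * (2 * (x k / a - 1) ^ 2) :=
        mul_le_mul_of_nonneg_left (sub_one_sub_log_le_two_mul_sq ht) (hσ k)
    _ = 2 / a ^ 2 * (σ k * (x k - a) ^ 2) := by field_simp

lemma mul_sub_le_of_lt_half (σ x : ι → ℝ) {m : ℝ} (hm : 0 < m) (hσ : ∀ k, m ≤ σ k)
    (hx : ∀ k, 0 < x k) {a : ℝ} (hmean : ∑ k, σ k * x k = (∑ k, σ k) * a) {j : ι}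
    (hj : x j < a / 2) :
    (∑ k, σ k * x k) * (∑ k, σ k * x k - ∑ k, σ k)
      ≤ 4 * (∑ k, σ k) ^ 2 / m * ∑ k, σ k * (x k - a) ^ 2 := by
  have hσ0 : ∀ k, 0 ≤ σ k := fun k => hm.le.trans (hσ k)
  have ha : 0 < a := by linarith [hx j]
  have hVj : m * (a / 2) ^ 2 ≤ ∑ k, σ k * (x k - a) ^ 2 := calc
    m * (a / 2) ^ 2 ≤ σ j * (x j - a) ^ 2 :=
      mul_le_mul (hσ j) (by nlinarith [hx j]) (sq_nonneg _) (hσ0 j)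
    _ ≤ _ := single_le_sum (f := fun k => σ k * (x k - a) ^ 2)
        (fun k _ => mul_nonneg (hσ0 k) (sq_nonneg _)) (mem_univ j)
  have hs : 0 ≤ ∑ k, σ k := sum_nonneg fun k _ => hσ0 k
  rw [hmean]
  calc (∑ k, σ k) * a * ((∑ k, σ k) * a - ∑ k, σ k)
      ≤ 4 * (∑ k, σ k) ^ 2 / m * (m * (a / 2) ^ 2) := by
        field_simp; nlinarith [mul_nonneg (sq_nonneg (∑ k, σ k)) ha.le]
    _ ≤ _ := by gcongr

lemma mul_sub_le_of_forall_half_le (σ x : ι → ℝ) (hσ : ∀ k, 0 ≤ σ k)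
    (hlog : ∑ k, σ k * log (x k) = 0) {a : ℝ} (ha : 0 < a)
    (hmean : ∑ k, σ k * x k = (∑ k, σ k) * a) (hx : ∀ k, a / 2 ≤ x k) :
    (∑ k, σ k * x k) * (∑ k, σ k * x k - ∑ k, σ k)
      ≤ 2 * (∑ k, σ k) * ∑ k, σ k * (x k - a) ^ 2 := by
  set s := ∑ k, σ k
  set V := ∑ k, σ k * (x k - a) ^ 2
  have hs : 0 ≤ s := sum_nonneg fun k _ => hσ k
  have hlog_a : s * log a ≤ 2 / a ^ 2 * V := by
    have h := sum_mul_div_sub_add_mul_log_le σ x hσ hlog ha hx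
    rw [hmean, mul_div_cancel_right₀ _ ha.ne'] at h
    linarith
  have hA_log : a * (a - 1) ≤ a ^ 2 * log a := by
    have hAA : a * (a - 1) = a ^ 2 * (1 - a⁻¹) := by field_simp
    rw [hAA]
    exact mul_le_mul_of_nonneg_left (one_sub_inv_le_log_of_pos ha) (sq_nonneg a)
  rw [hmean]
  calc s * a * (s * a - s) = s ^ 2 * (a * (a - 1)) := by ring
    _ ≤ s ^ 2 * (a ^ 2 * log a) := by gcongr
    _ = s * a ^ 2 * (s * log a) := by ring
    _ ≤ s * a ^ 2 * (2 / a ^ 2 * V) := by gcongr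
    _ = 2 * s * V := by field_simp

lemma sum_mul_mul_sub_le [Nonempty ι] (σ x : ι → ℝ) {m : ℝ} (hm : 0 < m)
    (hσ : ∀ k, m ≤ σ k) (hx : ∀ k, 0 < x k) (hlog : ∑ k, σ k * log (x k) = 0) (c : ℝ) :
    (∑ k, σ k * x k) * (∑ k, σ k * x k - ∑ k, σ k)
      ≤ 6 * (∑ k, σ k) ^ 2 / m * ∑ k, σ k * (x k - c) ^ 2 := by
  set s := ∑ k, σ k
  have hσ0 : ∀ k, 0 ≤ σ k := fun k => hm.le.trans (hσ k)
  have hms : m ≤ s := by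
    obtain ⟨k⟩ := ‹Nonempty ι›
    exact (hσ k).trans (single_le_sum (fun k _ => hσ0 k) (mem_univ k))
  have hs : 0 < s := hm.trans_le hms
  set A := (∑ k, σ k * x k) / s
  have hA : 1 ≤ A := (one_le_div hs).2 (sum_le_sum_mul_of_sum_mul_log_eq_zero σ x hσ0 hx hlog)
  have hmean : ∑ k, σ k * x k = s * A := (mul_div_cancel₀ _ hs.ne').symm
  set V := ∑ k, σ k * (x k - A) ^ 2
  have hV : 0 ≤ V := sum_nonneg fun k _ => mul_nonneg (hσ0 k) (sq_nonneg _)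
  suffices h : (∑ k, σ k * x k) * (∑ k, σ k * x k - s) ≤ 6 * s ^ 2 / m * V from
    h.trans (mul_le_mul_of_nonneg_left (sum_mul_sq_sub_div_le σ x hs c) (by positivity))
  by_cases hsmall : ∃ j, x j < A / 2
  · obtain ⟨j, hj⟩ := hsmall
    refine (mul_sub_le_of_lt_half σ x hm hσ hx hmean hj).trans ?_
    gcongr
    norm_num
  · push Not at hsmall
    refine (mul_sub_le_of_forall_half_le σ x hσ0 hlog (by linarith) hmean hsmall).trans ?_
    gcongr
    rw [le_div_iff₀ hm]
    nlinarith

lemma normSqOrthProj_le_mul_sub [Nonempty ι] (σ x : ι → ℝ) {m : ℝ} (hm : 0 < m)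
    (hσ : ∀ k, m ≤ σ k) (hx : ∀ k, 0 < x k) (hlog : ∑ k, σ k * log (x k) = 0) (lam : ℝ) :
    normSqOrthProj σ (fun k => lam * σ k * x k)
      ≤ 4 * (∑ k, σ k) / m
        * (lam ^ 2 * ((∑ k, σ k * x k) * (∑ k, σ k * x k - ∑ k, σ k))) := by
  have hσ0 : ∀ k, 0 ≤ σ k := fun k => hm.le.trans (hσ k)
  have hσs : ∀ k, σ k ≤ ∑ j, σ j := fun k => single_le_sum (fun j _ => hσ0 j) (mem_univ k)
  have hT : 0 < ∑ k, σ k ^ 2 := by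
    obtain ⟨k⟩ := ‹Nonempty ι›
    exact (pow_pos (hm.trans_le (hσ k)) 2).trans_le
      (single_le_sum (f := fun k => σ k ^ 2) (fun j _ => sq_nonneg _) (mem_univ k))
  calc normSqOrthProj σ (fun k => lam * σ k * x k)
      ≤ ∑ k, (lam * σ k * x k - lam * σ k) ^ 2 := normSqOrthProj_le σ _ hT lam
    _ ≤ ∑ k, lam ^ 2 * (∑ j, σ j) * (σ k * (x k - 1) ^ 2) := sum_le_sum fun k _ => by
        have h := mul_le_mul_of_nonneg_right (hσs k)
          (mul_nonneg (hσ0 k) (sq_nonneg (lam * (x k - 1))))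
        nlinarith
    _ = lam ^ 2 * (∑ j, σ j) * ∑ k, σ k * (x k - 1) ^ 2 := by rw [← mul_sum]
    _ ≤ lam ^ 2 * (∑ j, σ j)
          * (4 / m * ((∑ k, σ k * x k) * (∑ k, σ k * x k - ∑ k, σ k))) :=
        mul_le_mul_of_nonneg_left (sum_mul_sq_sub_one_le σ x hm hσ hx hlog)
          (mul_nonneg (sq_nonneg _) (sum_nonneg fun j _ => hσ0 j))
    _ = _ := by ring

lemma mul_sub_le_normSqOrthProj [Nonempty ι] (σ x : ι → ℝ) {m : ℝ} (hm : 0 < m)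
    (hσ : ∀ k, m ≤ σ k) (hx : ∀ k, 0 < x k) (hlog : ∑ k, σ k * log (x k) = 0) {lam : ℝ}
    (hlam : 0 < lam) :
    lam ^ 2 * ((∑ k, σ k * x k) * (∑ k, σ k * x k - ∑ k, σ k))
      ≤ 6 * (∑ k, σ k) ^ 2 / m ^ 2 * normSqOrthProj σ (fun k => lam * σ k * x k) := by
  set β := (∑ j, σ j * (lam * σ j * x j)) / ∑ j, σ j ^ 2
  have hproj : normSqOrthProj σ (fun k => lam * σ k * x k)
      = ∑ k, σ k ^ 2 * (lam * x k - β) ^ 2 :=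
    sum_congr rfl fun k _ => by ring
  calc lam ^ 2 * ((∑ k, σ k * x k) * (∑ k, σ k * x k - ∑ k, σ k))
      ≤ lam ^ 2 * (6 * (∑ k, σ k) ^ 2 / m * ∑ k, σ k * (x k - β / lam) ^ 2) :=
        mul_le_mul_of_nonneg_left (sum_mul_mul_sub_le σ x hm hσ hx hlog _) (sq_nonneg _)
    _ = 6 * (∑ k, σ k) ^ 2 / m * ∑ k, σ k * (lam * x k - β) ^ 2 := by
        rw [mul_left_comm, mul_sum]
        congr 1
        refine sum_congr rfl fun k _ => ?_
        field_simp
    _ ≤ 6 * (∑ k, σ k) ^ 2 / m * ∑ k, σ k ^ 2 * (lam * x k - β) ^ 2 / m := by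
        gcongr with k
        rw [le_div_iff₀ hm]
        have h := mul_le_mul_of_nonneg_left (hσ k) (mul_nonneg (hm.le.trans (hσ k))
          (sq_nonneg (lam * x k - β)))
        linarith
    _ = _ := by rw [hproj, ← sum_div]; ring

theorem exists_pos_bounds_normSqOrthProj (σ : ι → ℝ) {m : ℝ} (hm : 0 < m)
    (hσ : ∀ k, m ≤ σ k) {lam : ℝ} (hlam : 0 < lam) :
    ∃ C > 0, ∀ w : ι → ℝ, (∀ k, 0 < w k) → ∑ k, σ k * log (w k / (lam * σ k)) = 0 →
      C⁻¹ * normSqOrthProj σ w ≤ (∑ k, w k) * (∑ k, w k - lam * ∑ k, σ k) ∧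
      (∑ k, w k) * (∑ k, w k - lam * ∑ k, σ k) ≤ C * normSqOrthProj σ w := by
  rcases isEmpty_or_nonempty ι with hι | hι
  · exact ⟨1, one_pos, fun w _ _ => by simp [normSqOrthProj]⟩
  have hσ0 : ∀ k, 0 < σ k := fun k => hm.trans_le (hσ k)
  set s := ∑ k, σ k
  have hs : 0 < s := sum_pos (fun k _ => hσ0 k) univ_nonempty
  have hCL : 0 < 4 * s / m := by positivity
  have hCU : 0 < 6 * s ^ 2 / m ^ 2 := by positivity
  refine ⟨4 * s / m + 6 * s ^ 2 / m ^ 2, by positivity, fun w hw hlog => ?_⟩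
  set x := fun k => w k / (lam * σ k)
  have hx : ∀ k, 0 < x k := fun k => div_pos (hw k) (mul_pos hlam (hσ0 k))
  have hwx : w = fun k => lam * σ k * x k :=
    funext fun k => (mul_div_cancel₀ _ (mul_pos hlam (hσ0 k)).ne').symm
  have hmid : (∑ k, w k) * (∑ k, w k - lam * s)
      = lam ^ 2 * ((∑ k, σ k * x k) * (∑ k, σ k * x k - s)) := by
    simp only [hwx, mul_assoc, ← mul_sum]
    ring
  have hmid0 : 0 ≤ lam ^ 2 * ((∑ k, σ k * x k) * (∑ k, σ k * x k - s)) :=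
    mul_nonneg (sq_nonneg _) (mul_nonneg (sum_nonneg fun k _ => (mul_pos (hσ0 k) (hx k)).le)
      (sub_nonneg.2 (sum_le_sum_mul_of_sum_mul_log_eq_zero σ x (fun k => (hσ0 k).le) hx hlog)))
  have hP : 0 ≤ normSqOrthProj σ w := sum_nonneg fun k _ => sq_nonneg _
  rw [hmid, hwx]
  rw [hwx] at hP
  constructor
  · rw [inv_mul_le_iff₀ (by positivity)]
    exact (normSqOrthProj_le_mul_sub σ x hm hσ hx hlog lam).trans
      (mul_le_mul_of_nonneg_right (by linarith) hmid0)
  · exact (mul_sub_le_normSqOrthProj σ x hm hσ hx hlog hlam).trans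
      (mul_le_mul_of_nonneg_right (by linarith) hP)

lemma sum_mul_log_exp_neg_div_eq_zero (σ z : ι → ℝ) (hσ : ∀ k, 0 < σ k)
    (hz : ∑ k, σ k * z k = 0) :
    ∑ k, σ k * log (exp (-z k) / (exp (-(∑ j, σ j)⁻¹ * ∑ j, σ j * log (σ j)) * σ k)) = 0 := by
  rcases isEmpty_or_nonempty ι with hι | hι
  · simp
  have hs : (∑ j, σ j) ≠ 0 := (sum_pos (fun k _ => hσ k) univ_nonempty).ne'
  simp only [log_div (exp_ne_zero _) (mul_pos (exp_pos _) (hσ _)).ne',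
    log_mul (exp_ne_zero _) (hσ _).ne', log_exp, mul_sub, mul_add, sum_sub_distrib,
    sum_add_distrib, mul_neg, sum_neg_distrib, hz, ← sum_mul]
  field_simp
  ring

end

theorem stmt_13_general (n : ℕ) :
    let σ : Fin (n-1) → ℝ := fun k => (((k:ℕ):ℝ) + 1) * ((n:ℝ) - (((k:ℕ):ℝ) + 1)) / 2
    let μ₀ : ℝ := (∑ k, σ k)⁻¹
    let lamcr : ℝ := Real.exp (-μ₀ * ∑ k, σ k * Real.log (σ k))
    let zcr : Fin (n-1) → ℝ := fun k => -Real.log (lamcr * σ k)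
    ∃ C > 0, ∀ z : Fin (n-1) → ℝ, (∑ k, σ k * z k = 0) →
      C⁻¹ * (∑ k, (Real.exp (-z k)
              - ((∑ j, σ j * Real.exp (-z j)) / (∑ j, σ j ^ 2)) * σ k) ^ 2)
          ≤ (∑ k, Real.exp (-z k))
              * ((∑ k, Real.exp (-z k)) - ∑ k, Real.exp (-zcr k))
      ∧ (∑ k, Real.exp (-z k))
              * ((∑ k, Real.exp (-z k)) - ∑ k, Real.exp (-zcr k))
          ≤ C * ∑ k, (Real.exp (-z k)
              - ((∑ j, σ j * Real.exp (-z j)) / (∑ j, σ j ^ 2)) * σ k) ^ 2 := by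
  intro σ μ₀ lamcr zcr
  have hσ : ∀ k, 1 / 2 ≤ σ k := fun k => by
    have hk : ((k : ℕ) : ℝ) + 1 ≤ (n : ℝ) - 1 := by
      have := k.isLt
      rw [le_sub_iff_add_le]; exact_mod_cast (by omega : (k : ℕ) + 1 + 1 ≤ n)
    have h0 : (0 : ℝ) ≤ (k : ℕ) := Nat.cast_nonneg _
    simp only [σ]
    nlinarith
  have hσ0 : ∀ k, 0 < σ k := fun k => by linarith [hσ k]
  have hlam : 0 < lamcr := exp_pos _
  obtain ⟨C, hC, hbound⟩ := exists_pos_bounds_normSqOrthProj σ (by norm_num) hσ hlam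
  refine ⟨C, hC, fun z hz => ?_⟩
  have hcr : ∑ k, exp (-zcr k) = lamcr * ∑ k, σ k := by
    rw [mul_sum]
    exact sum_congr rfl fun k _ => by rw [neg_neg, exp_log (mul_pos hlam (hσ0 k))]
  rw [hcr]
  exact hbound _ (fun k => exp_pos _) (sum_mul_log_exp_neg_div_eq_zero σ z hσ0 hz)

/-- There exists `C > 0` such that for all `z` in the hyperplane `σ·z = 0`,
`C⁻¹ |P_σ e^{-z}|² ≤ (𝟙·e^{-z})(𝟙·e^{-z} - 𝟙·e^{-z_cr}) ≤ C |P_σ e^{-z}|²`,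
where `P_σ` is the orthogonal projection onto `{z : σ·z = 0}` and
`z_cr = -log(λ_cr σ)`, `λ_cr = exp(-μ₀ σ·log σ)`, `μ₀ = 1/(𝟙·σ)`. -/
theorem stmt_13 (n : ℕ) (hn : 2 ≤ n) :
    let σ : Fin (n-1) → ℝ := fun k => (((k:ℕ):ℝ) + 1) * ((n:ℝ) - (((k:ℕ):ℝ) + 1)) / 2
    let μ₀ : ℝ := (∑ k, σ k)⁻¹
    let lamcr : ℝ := Real.exp (-μ₀ * ∑ k, σ k * Real.log (σ k))
    let zcr : Fin (n-1) → ℝ := fun k => -Real.log (lamcr * σ k)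
    ∃ C > 0, ∀ z : Fin (n-1) → ℝ, (∑ k, σ k * z k = 0) →
      C⁻¹ * (∑ k, (Real.exp (-z k)
              - ((∑ j, σ j * Real.exp (-z j)) / (∑ j, σ j ^ 2)) * σ k) ^ 2)
          ≤ (∑ k, Real.exp (-z k))
              * ((∑ k, Real.exp (-z k)) - ∑ k, Real.exp (-zcr k))
      ∧ (∑ k, Real.exp (-z k))
              * ((∑ k, Real.exp (-z k)) - ∑ k, Real.exp (-zcr k))
          ≤ C * ∑ k, (Real.exp (-z k)
              - ((∑ j, σ j * Real.exp (-z j)) / (∑ j, σ j ^ 2)) * σ k) ^ 2 :=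
  stmt_13_general n
end

section
/- Let $\mathscr{U} = (u_{jk}) \in \mathbb{R}^{n\times n}$ be the symmetric tridiagonal matrix with $u_{k,k+1} = u_{k+1,k} = -k(n-k)$ and diagonal entries $u_{k,k} = (k-1)(n-k+1) + k(n-k)$ (so that all row sums vanish). Define the Legendre vectors $\vec P_0 = (1,\dots,1)$ and, for $1 \le \ell \le n-1$, $\vec P_\ell$ as the orthogonal projection of $(0^\ell, 1^\ell, \dots, (n-1)^\ell)$ onto the orthogonal complement of $\mathrm{span}(\vec P_0, \dots, \vec P_{\ell-1})$. Then $\mathscr{U} \vec P_\ell = \ell(\ell+1) \vec P_\ell$ for all $\ell \in \{0,1,\dots,n-1\}$. -/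
open Matrix
open Polynomial

lemma polyGH (n : ℕ) : ∀ ℓ : ℕ, ∃ g h : ℝ[X],
    g.degree < ((ℓ+1 : ℕ) : WithBot ℕ) ∧ h.degree < ((ℓ+2 : ℕ) : WithBot ℕ) ∧
    (X*(C (n:ℝ) - X)) * (X-1)^ℓ - ((X+1)*(C (n:ℝ) - 1 - X)) * (X+1)^ℓ
      = (2*(ℓ:ℝ[X])+2) * X^(ℓ+1) + g ∧
    (X*(C (n:ℝ) - X)) * (X-1)^ℓ + ((X+1)*(C (n:ℝ) - 1 - X)) * (X+1)^ℓ
      = -(2 * X^(ℓ+2)) + h := by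
  intro ℓ
  induction ℓ with
  | zero =>
    refine ⟨1 - C (n:ℝ), 2 * C (n:ℝ) * X - 2*X + C (n:ℝ) - 1, ?_, ?_, by ring, by ring⟩
    · calc (1 - C (n:ℝ)).degree = (C (1 - (n:ℝ))).degree := by rw [_root_.map_sub, _root_.map_one]
        _ ≤ 0 := degree_C_le
        _ < ((0+1 : ℕ) : WithBot ℕ) := by norm_num
    · calc (2 * C (n:ℝ) * X - 2*X + C (n:ℝ) - 1).degree
          = (C (2*(n:ℝ) - 2) * X + C ((n:ℝ) - 1)).degree := by
            congr 1; simp only [_root_.map_sub, _root_.map_mul, _root_.map_one, _root_.map_ofNat]; ring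
        _ ≤ max (C (2*(n:ℝ)-2) * X).degree (C ((n:ℝ)-1)).degree := degree_add_le _ _
        _ ≤ max 1 0 := max_le_max (degree_C_mul_X_le _) degree_C_le
        _ < ((0+2 : ℕ) : WithBot ℕ) := by norm_num
  | succ ℓ ih =>
    obtain ⟨g, h, hg, hh, hd, hs⟩ := ih
    have hXg : (X*g).degree < ((ℓ+2 : ℕ) : WithBot ℕ) := by
      calc (X*g).degree ≤ 1 + g.degree := by
            simpa using degree_mul_le X g
        _ < 1 + ((ℓ+1:ℕ) : WithBot ℕ) := WithBot.add_lt_add_left (by simp) hg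
        _ = ((ℓ+2:ℕ) : WithBot ℕ) := by push_cast; ring
    have hXh : (X*h).degree < ((ℓ+3 : ℕ) : WithBot ℕ) := by
      calc (X*h).degree ≤ 1 + h.degree := by simpa using degree_mul_le X h
        _ < 1 + ((ℓ+2:ℕ) : WithBot ℕ) := WithBot.add_lt_add_left (by simp) hh
        _ = ((ℓ+3:ℕ) : WithBot ℕ) := by push_cast; ring
    refine ⟨X*g - h, X*h - (2*(ℓ:ℝ[X])+2) * X^(ℓ+1) - g, ?_, ?_, ?_, ?_⟩
    · refine lt_of_le_of_lt (degree_sub_le _ _) (max_lt hXg ?_)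
      exact lt_of_lt_of_le hh (by exact_mod_cast le_refl _)
    · refine lt_of_le_of_lt (degree_sub_le _ _) (max_lt (lt_of_le_of_lt (degree_sub_le _ _) (max_lt hXh ?_)) ?_)
      · calc ((2*(ℓ:ℝ[X])+2) * X^(ℓ+1)).degree
            ≤ (2*(ℓ:ℝ[X])+2).degree + (X^(ℓ+1)).degree := degree_mul_le _ _
          _ ≤ 0 + (ℓ+1 : ℕ) := by
              refine add_le_add ?_ (degree_X_pow_le _)
              calc (2*(ℓ:ℝ[X])+2).degree = (C (2*(ℓ:ℝ)+2)).degree := by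
                    congr 1; push_cast; simp [_root_.map_add, _root_.map_mul, _root_.map_ofNat]
                _ ≤ 0 := degree_C_le
          _ < ((ℓ+3:ℕ) : WithBot ℕ) := by
              rw [zero_add]; exact_mod_cast by omega
      · exact lt_of_lt_of_le hg (by exact_mod_cast by omega)
    · rw [pow_succ (X-1), pow_succ (X+1)]
      push_cast
      linear_combination X * hd - hs
    · rw [pow_succ (X-1), pow_succ (X+1)]
      push_cast
      linear_combination X * hs - hd

lemma polyF (n : ℕ) : ∀ ℓ : ℕ, ∃ f : ℝ[X], f.degree < (ℓ : WithBot ℕ) ∧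
    (X*(C (n:ℝ) - X)) * (X^ℓ - (X-1)^ℓ) + ((X+1)*(C (n:ℝ) - 1 - X)) * (X^ℓ - (X+1)^ℓ)
      = (ℓ:ℝ[X]) * ((ℓ:ℝ[X])+1) * X^ℓ + f := by
  intro ℓ
  induction ℓ with
  | zero => exact ⟨0, by simp [WithBot.bot_lt_coe], by simp⟩
  | succ ℓ ih =>
    obtain ⟨f, hf, hF⟩ := ih
    obtain ⟨g, h, hg, _, hd, _⟩ := polyGH n ℓ
    refine ⟨X*f + g, ?_, ?_⟩
    · refine lt_of_le_of_lt (degree_add_le _ _) (max_lt ?_ ?_)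
      · calc (X*f).degree ≤ 1 + f.degree := by simpa using degree_mul_le X f
          _ < 1 + (ℓ : WithBot ℕ) := WithBot.add_lt_add_left (by simp) hf
          _ = ((ℓ+1:ℕ) : WithBot ℕ) := by push_cast; ring
      · exact_mod_cast hg
    · rw [pow_succ (X-1), pow_succ (X+1), pow_succ X]
      push_cast
      linear_combination X * hF + hd

lemma evalLow (ℓ : ℕ) (p : ℝ[X]) (h : p.degree < (ℓ : WithBot ℕ)) (x : ℝ) :
    p.eval x = ∑ m ∈ Finset.range ℓ, p.coeff m * x ^ m := by
  rcases eq_or_ne p 0 with rfl | hp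
  · simp
  · exact p.eval_eq_sum_range' ((natDegree_lt_iff_degree_lt hp).2 h) x

lemma rowLemma (n : ℕ) (𝒰 : Matrix (Fin n) (Fin n) ℝ)
    (h𝒰 : ∀ i j : Fin n, 𝒰 i j =
      if (i:ℕ) = (j:ℕ) then
        ((i:ℕ):ℝ) * ((n:ℝ) - ((i:ℕ):ℝ)) + (((i:ℕ):ℝ) + 1) * ((n:ℝ) - ((i:ℕ):ℝ) - 1)
      else if (j:ℕ) = (i:ℕ) + 1 then -((((i:ℕ):ℝ) + 1) * ((n:ℝ) - (((i:ℕ):ℝ) + 1)))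
      else if (i:ℕ) = (j:ℕ) + 1 then -((((j:ℕ):ℝ) + 1) * ((n:ℝ) - (((j:ℕ):ℝ) + 1)))
      else 0) (ℓ : ℕ) :
    ∃ a : ℕ → ℝ, ∀ j : Fin n, 𝒰.mulVec (fun k => ((k:ℕ):ℝ) ^ ℓ) j
      = (ℓ:ℝ) * ((ℓ:ℝ)+1) * ((j:ℕ):ℝ) ^ ℓ + ∑ m ∈ Finset.range ℓ, a m * ((j:ℕ):ℝ) ^ m := by
  obtain ⟨f, hf, hF⟩ := polyF n ℓ
  refine ⟨fun m => f.coeff m, ?_⟩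
  intro j
  have key : 𝒰.mulVec (fun k => ((k:ℕ):ℝ) ^ ℓ) j
      = (((j:ℕ):ℝ)*((n:ℝ)-((j:ℕ):ℝ))) * (((j:ℕ):ℝ)^ℓ - (((j:ℕ):ℝ)-1)^ℓ)
      + ((((j:ℕ):ℝ)+1)*((n:ℝ)-1-((j:ℕ):ℝ))) * (((j:ℕ):ℝ)^ℓ - (((j:ℕ):ℝ)+1)^ℓ) := by
    have hsplit : ∀ k : Fin n, 𝒰 j k * ((k:ℕ):ℝ)^ℓ =
        (if k = j then (((j:ℕ):ℝ)*((n:ℝ)-((j:ℕ):ℝ)) + (((j:ℕ):ℝ)+1)*((n:ℝ)-((j:ℕ):ℝ)-1)) * ((j:ℕ):ℝ)^ℓ else 0)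
        + (if (k:ℕ) = (j:ℕ)+1 then -((((j:ℕ):ℝ)+1)*((n:ℝ)-((j:ℕ):ℝ)-1)) * ((k:ℕ):ℝ)^ℓ else 0)
        + (if (j:ℕ) = (k:ℕ)+1 then -(((j:ℕ):ℝ)*((n:ℝ)-((j:ℕ):ℝ))) * ((k:ℕ):ℝ)^ℓ else 0) := by
      intro k
      rw [h𝒰]
      by_cases hA : (j:ℕ) = (k:ℕ)
      · rw [if_pos hA, if_pos (Fin.ext hA.symm : k = j), if_neg (by omega), if_neg (by omega)]
        have hk : ((k:ℕ):ℝ) = ((j:ℕ):ℝ) := by rw [hA]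
        rw [hk]; ring
      · have hkj : ¬ (k = j) := fun h => hA (by rw [h])
        rw [if_neg hA, if_neg hkj]
        by_cases hB : (k:ℕ) = (j:ℕ)+1
        · rw [if_pos hB, if_pos hB, if_neg (by omega)]
          ring
        · rw [if_neg hB, if_neg hB]
          by_cases hC : (j:ℕ) = (k:ℕ)+1
          · rw [if_pos hC, if_pos hC]
            have hk1 : ((k:ℕ):ℝ) + 1 = ((j:ℕ):ℝ) := by
              rw [hC]; push_cast; ring
            rw [← hk1]; ring
          · rw [if_neg hC, if_neg hC]; ring
    simp only [mulVec, dotProduct]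
    rw [Finset.sum_congr rfl (fun k _ => hsplit k), Finset.sum_add_distrib,
      Finset.sum_add_distrib]
    have s1 : (∑ k : Fin n, if k = j then (((j:ℕ):ℝ)*((n:ℝ)-((j:ℕ):ℝ)) + (((j:ℕ):ℝ)+1)*((n:ℝ)-((j:ℕ):ℝ)-1)) * ((j:ℕ):ℝ)^ℓ else 0)
        = (((j:ℕ):ℝ)*((n:ℝ)-((j:ℕ):ℝ)) + (((j:ℕ):ℝ)+1)*((n:ℝ)-((j:ℕ):ℝ)-1)) * ((j:ℕ):ℝ)^ℓ := by
      simp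
    have s2 : (∑ k : Fin n, if (k:ℕ) = (j:ℕ)+1 then -((((j:ℕ):ℝ)+1)*((n:ℝ)-((j:ℕ):ℝ)-1)) * ((k:ℕ):ℝ)^ℓ else 0)
        = -((((j:ℕ):ℝ)+1)*((n:ℝ)-((j:ℕ):ℝ)-1)) * (((j:ℕ):ℝ)+1)^ℓ := by
      rcases lt_or_ge ((j:ℕ)+1) n with hlt | hge
      · have hiff : ∀ k : Fin n, ((k:ℕ) = (j:ℕ)+1) ↔ k = (⟨(j:ℕ)+1, hlt⟩ : Fin n) :=
          fun k => ⟨fun h => Fin.ext h, fun h => by rw [h]⟩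
        simp only [hiff]
        rw [Finset.sum_ite_eq' Finset.univ (⟨(j:ℕ)+1, hlt⟩ : Fin n)
          (fun k => -((((j:ℕ):ℝ)+1)*((n:ℝ)-((j:ℕ):ℝ)-1)) * ((k:ℕ):ℝ)^ℓ)]
        simp only [Finset.mem_univ, if_pos]
        push_cast
        ring
      · have hn1 : (n:ℝ) - ((j:ℕ):ℝ) - 1 = 0 := by
          have hj := j.isLt
          have h1 : (j:ℕ) + 1 = n := by omega
          have h2 : (((j:ℕ) + 1 : ℕ) : ℝ) = (n:ℝ) := by exact_mod_cast h1
          push_cast at h2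
          linarith
        rw [Finset.sum_eq_zero, hn1]
        · ring
        · intro k _
          rw [if_neg]
          have := k.isLt
          omega
    have s3 : (∑ k : Fin n, if (j:ℕ) = (k:ℕ)+1 then -(((j:ℕ):ℝ)*((n:ℝ)-((j:ℕ):ℝ))) * ((k:ℕ):ℝ)^ℓ else 0)
        = -(((j:ℕ):ℝ)*((n:ℝ)-((j:ℕ):ℝ))) * (((j:ℕ):ℝ)-1)^ℓ := by
      rcases Nat.eq_zero_or_eq_succ_pred (j:ℕ) with hj | hj
      · have hj0 : ((j:ℕ):ℝ) = 0 := by rw [hj]; norm_num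
        rw [Finset.sum_eq_zero, hj0]
        · ring
        · intro k _
          rw [if_neg]; omega
      · set m := (j:ℕ) - 1 with hm
        have hmn : m < n := by have := j.isLt; omega
        have hjm : (j:ℕ) = m + 1 := hj
        have hiff : ∀ k : Fin n, ((j:ℕ) = (k:ℕ)+1) ↔ k = (⟨m, hmn⟩ : Fin n) :=
          fun k => ⟨fun h => Fin.ext (show (k:ℕ) = m by omega), fun h => by rw [h]; simp [hjm]⟩
        simp only [hiff]
        rw [Finset.sum_ite_eq' Finset.univ (⟨m, hmn⟩ : Fin n)
          (fun k => -(((j:ℕ):ℝ)*((n:ℝ)-((j:ℕ):ℝ))) * ((k:ℕ):ℝ)^ℓ)]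
        simp only [Finset.mem_univ, if_pos]
        have : ((m:ℕ):ℝ) = ((j:ℕ):ℝ) - 1 := by rw [hjm]; push_cast; ring
        simp only [this]
    rw [s1, s2, s3]
    ring
  have heval := congrArg (fun p => Polynomial.eval ((j:ℕ):ℝ) p) hF
  simp only [eval_add, eval_mul, eval_sub, eval_pow, eval_X, eval_C, eval_one,
    eval_natCast] at heval
  rw [key, heval, evalLow ℓ f hf]


/-- The symmetric tridiagonal matrix `𝒰` with `u_{k,k+1} = u_{k+1,k} = -k(n-k)` and diagonal
`u_{k,k} = (k-1)(n-k+1) + k(n-k)` (1-based `k = i+1`) has the Legendre vectors `P_ℓ` as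
eigenvectors, `𝒰 P_ℓ = ℓ(ℓ+1) P_ℓ`. Here `P_0 = (1,…,1)` and `P_ℓ` is the orthogonal
projection of `(0^ℓ, 1^ℓ, …, (n-1)^ℓ)` onto the orthogonal complement of
`span(P_0, …, P_{ℓ-1})`. -/
theorem stmt_14 (n : ℕ) (hn : 1 ≤ n)
    (𝒰 : Matrix (Fin n) (Fin n) ℝ)
    (h𝒰 : ∀ i j : Fin n, 𝒰 i j =
      if (i:ℕ) = (j:ℕ) then
        ((i:ℕ):ℝ) * ((n:ℝ) - ((i:ℕ):ℝ)) + (((i:ℕ):ℝ) + 1) * ((n:ℝ) - ((i:ℕ):ℝ) - 1)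
      else if (j:ℕ) = (i:ℕ) + 1 then -((((i:ℕ):ℝ) + 1) * ((n:ℝ) - (((i:ℕ):ℝ) + 1)))
      else if (i:ℕ) = (j:ℕ) + 1 then -((((j:ℕ):ℝ) + 1) * ((n:ℝ) - (((j:ℕ):ℝ) + 1)))
      else 0)
    (P : ℕ → Fin n → ℝ)
    (hP0 : P 0 = fun _ => 1)
    (hPorth : ∀ ℓ < n, ∀ m < ℓ, ∑ j, P ℓ j * P m j = 0)
    (hPproj : ∀ ℓ, 1 ≤ ℓ → ℓ < n → ∃ c : ℕ → ℝ,
      ∀ j : Fin n, ((j:ℕ):ℝ) ^ ℓ - P ℓ j = ∑ m ∈ Finset.range ℓ, c m * P m j) :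
    ∀ ℓ < n, 𝒰.mulVec (P ℓ) = fun j => ((ℓ:ℝ) * ((ℓ:ℝ) + 1)) * P ℓ j := by
  -- symmetry of 𝒰
  have hsym : ∀ i j : Fin n, 𝒰 i j = 𝒰 j i := by
    intro i j
    rw [h𝒰, h𝒰]
    by_cases hA : (i:ℕ) = (j:ℕ)
    · rw [if_pos hA, if_pos hA.symm]
      have : ((i:ℕ):ℝ) = ((j:ℕ):ℝ) := by rw [hA]
      rw [this]
    · rw [if_neg hA, if_neg (Ne.symm hA)]
      by_cases hB : (j:ℕ) = (i:ℕ)+1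
      · rw [if_pos hB, if_neg (by omega), if_pos hB]
      · rw [if_neg hB]
        by_cases hC : (i:ℕ) = (j:ℕ)+1
        · rw [if_pos hC, if_pos hC]
        · rw [if_neg hC, if_neg hC, if_neg hB]
  -- 𝒰 is a symmetric bilinear form
  have hsymBil : ∀ x y : Fin n → ℝ,
      (∑ jj, 𝒰.mulVec x jj * y jj) = ∑ jj, x jj * 𝒰.mulVec y jj := by
    intro x y
    simp only [mulVec, dotProduct]
    calc (∑ jj, (∑ k, 𝒰 jj k * x k) * y jj)
        = ∑ jj, ∑ k, 𝒰 jj k * x k * y jj := by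
          exact Finset.sum_congr rfl fun jj _ => Finset.sum_mul _ _ _
      _ = ∑ k, ∑ jj, 𝒰 jj k * x k * y jj := Finset.sum_comm
      _ = ∑ k, x k * ∑ jj, 𝒰 k jj * y jj := by
          refine Finset.sum_congr rfl fun k _ => ?_
          rw [Finset.mul_sum]
          exact Finset.sum_congr rfl fun jj _ => by rw [hsym jj k]; ring
  -- unified projection hypothesis
  have hproj : ∀ ℓ, ℓ < n → ∃ c : ℕ → ℝ,
      ∀ j : Fin n, ((j:ℕ):ℝ)^ℓ - P ℓ j = ∑ m ∈ Finset.range ℓ, c m * P m j := by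
    intro ℓ hℓ
    rcases Nat.eq_zero_or_pos ℓ with rfl | hpos
    · exact ⟨0, fun j => by simp [hP0]⟩
    · exact hPproj ℓ hpos hℓ
  intro ℓ0
  induction ℓ0 using Nat.strong_induction_on with
  | _ ℓ IH =>
  intro hℓ
  obtain ⟨c, hc⟩ := hproj ℓ hℓ
  obtain ⟨a, ha⟩ := rowLemma n 𝒰 h𝒰 ℓ
  choose cm hcm using fun (m : ℕ) (hm : m < ℓ) => hproj m (lt_trans hm hℓ)
  have hIH : ∀ m, m < ℓ → ∀ j, 𝒰.mulVec (P m) j = ((m:ℝ)*((m:ℝ)+1)) * P m j :=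
    fun m hm j => congrFun (IH m hm (lt_trans hm hℓ)) j
  set w : Fin n → ℝ :=
    fun j => 𝒰.mulVec (P ℓ) j - ((ℓ:ℝ)*((ℓ:ℝ)+1)) * P ℓ j with hwdef
  -- expand mulVec (P ℓ)
  have hPl : ∀ k : Fin n, P ℓ k = ((k:ℕ):ℝ)^ℓ - ∑ m ∈ Finset.range ℓ, c m * P m k :=
    fun k => by have := hc k; linarith
  have expand : ∀ j, 𝒰.mulVec (P ℓ) j
      = 𝒰.mulVec (fun k => ((k:ℕ):ℝ)^ℓ) j
        - ∑ m ∈ Finset.range ℓ, c m * 𝒰.mulVec (P m) j := by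
    intro j
    simp only [mulVec, dotProduct]
    have hterm : ∀ k : Fin n, 𝒰 j k * P ℓ k
        = 𝒰 j k * ((k:ℕ):ℝ)^ℓ - ∑ m ∈ Finset.range ℓ, c m * (𝒰 j k * P m k) := by
      intro k
      rw [hPl k, mul_sub, Finset.mul_sum]
      congr 1
      exact Finset.sum_congr rfl fun m _ => by ring
    rw [Finset.sum_congr rfl fun k _ => hterm k, Finset.sum_sub_distrib]
    congr 1
    rw [Finset.sum_comm]
    exact Finset.sum_congr rfl fun m _ => by rw [Finset.mul_sum]
  -- representation of w as a combination of lower P's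
  have hw : ∀ j, w j = (((ℓ:ℝ)*((ℓ:ℝ)+1)) * ∑ m ∈ Finset.range ℓ, c m * P m j)
      + (∑ m ∈ Finset.range ℓ, a m * ((j:ℕ):ℝ)^m)
      - ∑ m ∈ Finset.range ℓ, (c m * ((m:ℝ)*((m:ℝ)+1))) * P m j := by
    intro j
    have e4 : ∑ m ∈ Finset.range ℓ, c m * 𝒰.mulVec (P m) j
        = ∑ m ∈ Finset.range ℓ, (c m * ((m:ℝ)*((m:ℝ)+1))) * P m j :=
      Finset.sum_congr rfl fun m hm => by rw [hIH m (Finset.mem_range.1 hm) j]; ring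
    have e3 : ((j:ℕ):ℝ)^ℓ = P ℓ j + ∑ m ∈ Finset.range ℓ, c m * P m j := by
      have := hc j; linarith
    simp only [hwdef]
    rw [expand j, e4, ha j, e3]
    ring
  -- turn hw into a clean representation
  have hrep : ∃ e : ℕ → ℝ, ∀ j, w j = ∑ m ∈ Finset.range ℓ, e m * P m j := by
    set ite2 : ℕ → ℕ → ℝ :=
      fun m i => if h : m < ℓ then (if i < m then cm m h i else 0) else 0 with hite2
    refine ⟨fun i => ((ℓ:ℝ)*((ℓ:ℝ)+1)) * c i + a i - c i * ((i:ℝ)*((i:ℝ)+1))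
      + ∑ m ∈ Finset.range ℓ, a m * ite2 m i, ?_⟩
    intro j
    rw [hw j]
    -- rewrite the middle monomial sum
    have hmono : ∀ m, m < ℓ → a m * ((j:ℕ):ℝ)^m
        = a m * P m j + ∑ i ∈ Finset.range ℓ, (a m * ite2 m i) * P i j := by
      intro m hm
      have hx : ((j:ℕ):ℝ)^m = P m j + ∑ i ∈ Finset.range m, cm m hm i * P i j := by
        have := hcm m hm j; linarith
      have hsub : ∑ i ∈ Finset.range m, cm m hm i * P i j
          = ∑ i ∈ Finset.range ℓ, ite2 m i * P i j := by
        have step1 : ∑ i ∈ Finset.range m, cm m hm i * P i j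
            = ∑ i ∈ Finset.range m, ite2 m i * P i j :=
          Finset.sum_congr rfl fun i hi => by
            simp [hite2, hm, Finset.mem_range.1 hi]
        rw [step1]
        refine Finset.sum_subset (Finset.range_subset_range.2 (le_of_lt hm)) ?_
        intro i _ hi
        have hnot : ¬ i < m := fun h => hi (Finset.mem_range.2 h)
        simp [hite2, hm, hnot]
      rw [hx, hsub, mul_add, Finset.mul_sum]
      congr 1
      exact Finset.sum_congr rfl fun i _ => by ring
    have hmid : (∑ m ∈ Finset.range ℓ, a m * ((j:ℕ):ℝ)^m)
        = (∑ m ∈ Finset.range ℓ, a m * P m j)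
          + ∑ i ∈ Finset.range ℓ, (∑ m ∈ Finset.range ℓ, a m * ite2 m i) * P i j := by
      rw [Finset.sum_congr rfl fun m hm => hmono m (Finset.mem_range.1 hm),
        Finset.sum_add_distrib]
      congr 1
      rw [Finset.sum_comm]
      exact Finset.sum_congr rfl fun i _ => by rw [Finset.sum_mul]
    rw [hmid, Finset.mul_sum]
    rw [← Finset.sum_add_distrib, ← Finset.sum_add_distrib, ← Finset.sum_sub_distrib]
    exact Finset.sum_congr rfl fun m _ => by beta_reduce; ring
  -- orthogonality of w to lower P's
  have horth : ∀ m, m < ℓ → (∑ j, w j * P m j) = 0 := by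
    intro m hm
    have h1 : (∑ j, 𝒰.mulVec (P ℓ) j * P m j) = 0 := by
      rw [hsymBil (P ℓ) (P m)]
      rw [Finset.sum_congr rfl fun j _ => by rw [hIH m hm j]]
      rw [Finset.sum_congr rfl (fun j _ => (by ring :
        P ℓ j * (((m:ℝ)*((m:ℝ)+1)) * P m j) = ((m:ℝ)*((m:ℝ)+1)) * (P ℓ j * P m j))),
        ← Finset.mul_sum, hPorth ℓ hℓ m hm, mul_zero]
    have h2 : (∑ j, (((ℓ:ℝ)*((ℓ:ℝ)+1)) * P ℓ j) * P m j) = 0 := by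
      rw [Finset.sum_congr rfl (fun j _ => (by ring :
        (((ℓ:ℝ)*((ℓ:ℝ)+1)) * P ℓ j) * P m j = ((ℓ:ℝ)*((ℓ:ℝ)+1)) * (P ℓ j * P m j))),
        ← Finset.mul_sum, hPorth ℓ hℓ m hm, mul_zero]
    have : (∑ j, w j * P m j)
        = (∑ j, 𝒰.mulVec (P ℓ) j * P m j)
          - ∑ j, (((ℓ:ℝ)*((ℓ:ℝ)+1)) * P ℓ j) * P m j := by
      rw [← Finset.sum_sub_distrib]
      exact Finset.sum_congr rfl fun j _ => by simp only [hwdef]; ring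
    rw [this, h1, h2, sub_zero]
  -- w = 0
  obtain ⟨e, he⟩ := hrep
  have hww : (∑ j, w j * w j) = 0 := by
    calc (∑ j, w j * w j) = ∑ j, ∑ m ∈ Finset.range ℓ, e m * (w j * P m j) := by
          refine Finset.sum_congr rfl fun j _ => ?_
          rw [he j, Finset.mul_sum]  -- w j * Σ = Σ w j * (e m * P m j)
          exact Finset.sum_congr rfl fun m _ => by ring
      _ = ∑ m ∈ Finset.range ℓ, ∑ j, e m * (w j * P m j) := Finset.sum_comm
      _ = ∑ m ∈ Finset.range ℓ, e m * ∑ j, w j * P m j := by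
          exact Finset.sum_congr rfl fun m _ => (Finset.mul_sum _ _ _).symm
      _ = 0 := Finset.sum_eq_zero fun m hm => by
          rw [horth m (Finset.mem_range.1 hm), mul_zero]
  have hwz : ∀ j, w j = 0 := by
    intro j
    have h0 : ∀ j ∈ (Finset.univ : Finset (Fin n)), 0 ≤ w j * w j :=
      fun j _ => mul_self_nonneg _
    exact mul_self_eq_zero.1
      ((Finset.sum_eq_zero_iff_of_nonneg h0).1 hww j (Finset.mem_univ j))
  funext j
  have := hwz j
  simp only [hwdef] at this
  linarith
end

section
/- (Parabolic solution of the attractive Toda system.) For $n \ge 2$, $M, \kappa > 0$, the functions $a_k(t)$ defined (up to a common translation) by $a_{k+1}(t) - a_k(t) = 2\log(\kappa t) - \log(M k(n-k)/2)$ and momenta $p_k(t) = -M(n+1-2k)/t$ satisfy, for all $t > 0$ large enough that all $a_{k+1}-a_k > 0$: $a_k'(t) = M^{-1} p_k(t)$ and $p_k'(t) = 2\kappa^2 (e^{-(a_{k+1}(t)-a_k(t))} - e^{-(a_k(t)-a_{k-1}(t))})$, with the convention $a_0 = -\infty$, $a_{n+1} = +\infty$ (so the corresponding exponential terms vanish).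 -/
/-!
With `w k = M k (n - k) / 2`, the ansatz makes every gap `a_{k+1} - a_k = log ((κ t)² / w k)`,
so each exponential force term is `w k / (κ t)²`. Since `w 0 = w n = 0`, the boundary
conventions fit the same formula, and the force on `a_k` is
`2 κ² (w k - w (k-1)) / (κ t)² = M (n + 1 - 2k) / t²`, which is exactly the derivative of
`p_k = -M (n + 1 - 2k) / t`; likewise `a_k' = -(n + 1 - 2k) / t = M⁻¹ p_k`.
-/

noncomputable section

namespace TodaParabolic

open Real

variable (n : ℕ) (M κ c : ℝ)

def weight (x : ℝ) : ℝ := M * x * (n - x) / 2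

-- `k` is 0-based: `pos n M κ c k` is the paper's `a_{k+1}`, and likewise for `mom`.
def pos (k : ℕ) (t : ℝ) : ℝ :=
  c - ((n:ℝ) - 1 - 2 * (k:ℝ)) * log t
    + ∑ j ∈ Finset.range k, (2 * log κ - log (weight n M ((j:ℝ) + 1)))

def mom (k : ℕ) (t : ℝ) : ℝ := -M * ((n:ℝ) - 1 - 2 * (k:ℝ)) / t

variable {n M κ}

lemma weight_zero : weight n M 0 = 0 := by simp [weight]

lemma weight_natCast_self : weight n M n = 0 := by simp [weight]

lemma weight_add_one_sub (x : ℝ) :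
    weight n M (x + 1) - weight n M x = M * ((n:ℝ) - 1 - 2 * x) / 2 := by
  unfold weight; ring

lemma weight_pos (hM : 0 < M) {x : ℝ} (hx₀ : 0 < x) (hxn : x < n) : 0 < weight n M x := by
  have : 0 < (n:ℝ) - x := by linarith
  unfold weight; positivity

variable {t : ℝ}

lemma pos_succ_sub (hκ : κ ≠ 0) (ht : t ≠ 0) (k : ℕ) :
    pos n M κ c (k + 1) t - pos n M κ c k t
      = 2 * log (κ * t) - log (weight n M ((k:ℝ) + 1)) := by
  rw [pos, pos, Finset.sum_range_succ, log_mul hκ ht]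
  push_cast
  ring

lemma exp_neg_pos_succ_sub (hM : 0 < M) (hκ : κ ≠ 0) (ht : t ≠ 0) {k : ℕ} (hk : k + 1 < n) :
    exp (-(pos n M κ c (k + 1) t - pos n M κ c k t)) = weight n M ((k:ℝ) + 1) / (κ * t) ^ 2 := by
  have hw : 0 < weight n M ((k:ℝ) + 1) := weight_pos hM (by positivity) (by exact_mod_cast hk)
  have hsq : 2 * log (κ * t) = log ((κ * t) ^ 2) := by simp [log_pow]
  rw [pos_succ_sub c hκ ht, neg_sub, hsq, ← log_div hw.ne' (by positivity),
    exp_log (div_pos hw (by positivity))]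

lemma upper_force_eq (hM : 0 < M) (hκ : κ ≠ 0) (ht : t ≠ 0) {k : ℕ} (hk : k < n) :
    (if k + 1 < n then exp (-(pos n M κ c (k + 1) t - pos n M κ c k t)) else 0)
      = weight n M ((k:ℝ) + 1) / (κ * t) ^ 2 := by
  split_ifs with hk'
  · exact exp_neg_pos_succ_sub c hM hκ ht hk'
  · have hn : (k:ℝ) + 1 = n := by exact_mod_cast (show k + 1 = n by omega)
    rw [hn, weight_natCast_self, zero_div]

lemma lower_force_eq (hM : 0 < M) (hκ : κ ≠ 0) (ht : t ≠ 0) {k : ℕ} (hk : k < n) :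
    (if k = 0 then 0 else exp (-(pos n M κ c k t - pos n M κ c (k - 1) t)))
      = weight n M k / (κ * t) ^ 2 := by
  split_ifs with hk₀
  · rw [hk₀, Nat.cast_zero, weight_zero, zero_div]
  · obtain ⟨j, rfl⟩ := Nat.exists_eq_succ_of_ne_zero hk₀
    rw [Nat.succ_sub_one, Nat.cast_succ]
    exact exp_neg_pos_succ_sub c hM hκ ht hk

lemma hasDerivAt_pos (ht : t ≠ 0) (k : ℕ) :
    HasDerivAt (pos n M κ c k) (-((n:ℝ) - 1 - 2 * (k:ℝ)) / t) t :=
  ((((hasDerivAt_log ht).const_mul ((n:ℝ) - 1 - 2 * (k:ℝ))).const_sub c).add_const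
    (∑ j ∈ Finset.range k, (2 * log κ - log (weight n M ((j:ℝ) + 1))))).congr_deriv (by ring)

lemma hasDerivAt_mom (ht : t ≠ 0) (k : ℕ) :
    HasDerivAt (mom n M k) (M * ((n:ℝ) - 1 - 2 * (k:ℝ)) / t ^ 2) t := by
  have hmom : mom n M k = fun s => -M * ((n:ℝ) - 1 - 2 * (k:ℝ)) * s⁻¹ :=
    funext fun s => div_eq_mul_inv _ _
  rw [hmom]
  exact ((hasDerivAt_inv ht).const_mul _).congr_deriv (by ring)

end TodaParabolic

end

open TodaParabolic in
theorem stmt_15_general (n : ℕ) (M κ c : ℝ) (hM : 0 < M) (hκ : 0 < κ)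
    (a : ℕ → ℝ → ℝ)
    (ha : ∀ k t, a k t = c - ((n:ℝ) - 1 - 2*(k:ℝ)) * Real.log t
        + ∑ j ∈ Finset.range k,
            (2 * Real.log κ - Real.log (M * ((j:ℝ) + 1) * ((n:ℝ) - ((j:ℝ) + 1)) / 2)))
    (p : ℕ → ℝ → ℝ)
    (hp : ∀ k t, p k t = -M * ((n:ℝ) - 1 - 2*(k:ℝ)) / t)
    (t : ℝ) (ht : 0 < t) :
    (∀ k : ℕ, k + 1 < n →
        a (k+1) t - a k t
          = 2 * Real.log (κ * t) - Real.log (M * ((k:ℝ) + 1) * ((n:ℝ) - ((k:ℝ) + 1)) / 2))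
    ∧ (∀ k < n, HasDerivAt (a k) (M⁻¹ * p k t) t)
    ∧ (∀ k < n, HasDerivAt (p k)
        (2 * κ^2 * ((if k + 1 < n then Real.exp (-(a (k+1) t - a k t)) else 0)
          - (if k = 0 then 0 else Real.exp (-(a k t - a (k-1) t))))) t) := by
  obtain rfl : a = pos n M κ c := funext fun k => funext (ha k)
  obtain rfl : p = mom n M := funext fun k => funext (hp k)
  refine ⟨fun k _ => pos_succ_sub c hκ.ne' ht.ne' k, fun k _ => ?_, fun k hk => ?_⟩
  · convert hasDerivAt_pos c ht.ne' k using 1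
    simp only [mom]
    field_simp
  · convert hasDerivAt_mom ht.ne' k using 1
    rw [upper_force_eq c hM hκ.ne' ht.ne' hk, lower_force_eq c hM hκ.ne' ht.ne' hk,
      ← sub_div, weight_add_one_sub]
    field_simp

/-- Parabolic solution of the attractive Toda system. With the explicit choice (`k` is the
0-based index, so `a k` stands for `a_{k+1}`, `p k` for `p_{k+1} = -M(n+1-2(k+1))/t`)
the functions satisfy the prescribed mutual distances
`a_{k+1}(t) - a_k(t) = 2 log(κ t) - log(M k(n-k)/2)` and the Toda system
`a_k' = M⁻¹ p_k`, `p_k' = 2κ²(e^{-(a_{k+1}-a_k)} - e^{-(a_k-a_{k-1})})`, with the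
convention that the boundary exponential terms vanish. -/
theorem stmt_15 (n : ℕ) (hn : 2 ≤ n) (M κ c : ℝ) (hM : 0 < M) (hκ : 0 < κ)
    (a : ℕ → ℝ → ℝ)
    (ha : ∀ k t, a k t = c - ((n:ℝ) - 1 - 2*(k:ℝ)) * Real.log t
        + ∑ j ∈ Finset.range k,
            (2 * Real.log κ - Real.log (M * ((j:ℝ) + 1) * ((n:ℝ) - ((j:ℝ) + 1)) / 2)))
    (p : ℕ → ℝ → ℝ)
    (hp : ∀ k t, p k t = -M * ((n:ℝ) - 1 - 2*(k:ℝ)) / t)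
    (t : ℝ) (ht : 0 < t)
    (hgap : ∀ k : ℕ, k + 1 < n → 0 < a (k+1) t - a k t) :
    (∀ k : ℕ, k + 1 < n →
        a (k+1) t - a k t
          = 2 * Real.log (κ * t) - Real.log (M * ((k:ℝ) + 1) * ((n:ℝ) - ((k:ℝ) + 1)) / 2))
    ∧ (∀ k < n, HasDerivAt (a k) (M⁻¹ * p k t) t)
    ∧ (∀ k < n, HasDerivAt (p k)
        (2 * κ^2 * ((if k + 1 < n then Real.exp (-(a (k+1) t - a k t)) else 0)
          - (if k = 0 then 0 else Real.exp (-(a k t - a (k-1) t))))) t) :=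
  stmt_15_general n M κ c hM hκ a ha p hp t ht
end
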